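/- arXiv:2308.12872 — 5 statements merged into one kernel-verified Lean document; each statement's English description precedes it below -/
import Mathlib

section
/- Let F be the sequence of positive integers with F_1 = 1, F_2 = 2 and F_{n+2} = F_{n+1} + F_n for all n ≥ 1. For a positive integer x let z(x) be the number of integers n with 0 ≤ n < x such that the binary expansion n = Σ_k ε_k 2^{k−1} (ε_k ∈ {0,1}) has no index k with ε_k = ε_{k+1} = 1. Let A be a finite set of positive integers; define Ā = A if A contains no two consecutive integers, and otherwise Ā = {k ∈ A : k ≥ j} where j is the largest element of A with j + 1 ∈ A. Then z(Σ_{k∈A} 2^{k−1}) = Σ_{k∈Ā} F_k. -/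
/-- `n` has no two adjacent ones in its binary expansion `n = Σ_k ε_k 2^(k-1)`
(here `n.testBit (k-1)` is the digit `ε_k`). -/
def NoAdjacentOnes (n : ℕ) : Prop := ∀ k : ℕ, ¬ (n.testBit k ∧ n.testBit (k + 1))

/-- `z x` is the number of integers `0 ≤ n < x` whose binary expansion has no
two adjacent digits equal to 1. -/
noncomputable def zbin (x : ℕ) : ℕ := Set.ncard {n : ℕ | n < x ∧ NoAdjacentOnes n}

lemma noAdj_iff (n : ℕ) : NoAdjacentOnes n ↔ n &&& (n / 2) = 0 := by
  constructor
  · intro h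
    apply Nat.zero_of_testBit_eq_false
    intro i
    have := h i
    simp only [Nat.testBit_and, Nat.testBit_div_two]
    by_cases h1 : n.testBit i <;> by_cases h2 : n.testBit (i+1) <;> simp_all
  · intro h k hk
    have := congrArg (fun m => m.testBit k) h
    simp [Nat.testBit_and, Nat.testBit_div_two, hk.1, hk.2] at this

instance : DecidablePred NoAdjacentOnes := fun n => decidable_of_iff _ (noAdj_iff n).symm

def S (x : ℕ) : Finset ℕ := (Finset.range x).filter NoAdjacentOnes

lemma zbin_eq (x : ℕ) : zbin x = (S x).card := by
  rw [zbin]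
  have : {n : ℕ | n < x ∧ NoAdjacentOnes n} = ↑(S x) := by
    ext n; simp [S, Finset.mem_filter, Finset.mem_range]
  rw [this, Set.ncard_coe_finset]

lemma testBit_pow_add {m n : ℕ} (hn : n < 2^(m+1)) (k : ℕ) :
    (2^(m+1) + n).testBit k = if k < m + 1 then n.testBit k else decide (k = m + 1) := by
  have h : 2^(m+1) + n = 2^(m+1) * 1 + n := by ring
  rw [h, Nat.testBit_two_pow_mul_add 1 hn k]
  by_cases hk : k < m + 1
  · simp [hk]
  · simp only [hk, if_false]
    rcases Nat.lt_or_ge (m+1) k with h' | h'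
    · have h1 : Nat.testBit 1 (k - (m+1)) = false := by
        have h2 : (1:ℕ) = 2^0 := rfl
        rw [h2, Nat.testBit_two_pow_of_ne (by omega)]
      rw [h1]
      simp
      omega
    · have : k = m + 1 := by omega
      subst this
      simp

lemma key (m n : ℕ) (hn : n < 2^(m+1)) :
    NoAdjacentOnes (2^(m+1) + n) ↔ NoAdjacentOnes n ∧ n.testBit m = false := by
  have hb : ∀ j, m + 1 ≤ j → n.testBit j = false := by
    intro j hj
    exact Nat.testBit_lt_two_pow (lt_of_lt_of_le hn (Nat.pow_le_pow_right (by norm_num) hj))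
  constructor
  · intro h
    constructor
    · intro k hk
      rcases Nat.lt_or_ge (k+1) (m+1) with h' | h'
      · refine h k ⟨?_, ?_⟩
        · rw [testBit_pow_add hn, if_pos (by omega : k < m+1)]; exact hk.1
        · rw [testBit_pow_add hn, if_pos h']; exact hk.2
      · exact absurd hk.2 (by simp [hb (k+1) h'])
    · by_contra hm
      simp at hm
      exact h m ⟨by rw [testBit_pow_add hn]; simp [hm],
        by rw [testBit_pow_add hn]; simp⟩
  · rintro ⟨h1, h2⟩ k hk
    obtain ⟨hk1, hk2⟩ := hk
    rw [testBit_pow_add hn] at hk1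
    rw [testBit_pow_add hn] at hk2
    rcases Nat.lt_or_ge (k+1) (m+1) with h' | h'
    · rw [if_pos (by omega : k < m+1)] at hk1
      rw [if_pos h'] at hk2
      exact h1 k ⟨hk1, hk2⟩
    · rcases Nat.eq_or_lt_of_le h' with h'' | h''
      · have hkm : k = m := by omega
        rw [if_pos (by omega : k < m+1), hkm] at hk1
        simp [h2] at hk1
      · rw [if_neg (by omega : ¬ (k + 1 < m + 1))] at hk2
        simp at hk2
        omega

lemma S_split (m y : ℕ) (hy : y ≤ 2^(m+1)) :
    (S (2^(m+1) + y)).card = (S (2^(m+1))).card +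
      ((Finset.range y).filter (fun n => NoAdjacentOnes n ∧ n.testBit m = false)).card := by
  have himg : S (2^(m+1) + y) = S (2^(m+1)) ∪
      ((Finset.range y).filter (fun n => NoAdjacentOnes n ∧ n.testBit m = false)).image
        (fun n => 2^(m+1) + n) := by
    ext n
    simp only [S, Finset.mem_filter, Finset.mem_range, Finset.mem_union, Finset.mem_image]
    constructor
    · rintro ⟨hlt, hadj⟩
      by_cases hc : n < 2^(m+1)
      · exact Or.inl ⟨hc, hadj⟩
      · right
        refine ⟨n - 2^(m+1), ⟨by omega, ?_⟩, by omega⟩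
        have hn' : n - 2^(m+1) < 2^(m+1) := by omega
        have heq : 2^(m+1) + (n - 2^(m+1)) = n := by omega
        have := (key m _ hn').mp (by rw [heq]; exact hadj)
        exact this
    · rintro (⟨hlt, hadj⟩ | ⟨a, ⟨ha, hadj, hbit⟩, rfl⟩)
      · exact ⟨by omega, hadj⟩
      · exact ⟨by omega, (key m a (by omega)).mpr ⟨hadj, hbit⟩⟩
  rw [himg, Finset.card_union_of_disjoint, Finset.card_image_of_injective _
    (add_right_injective _)]
  rw [Finset.disjoint_right]
  rintro n hn hn'
  simp only [Finset.mem_image, Finset.mem_filter, Finset.mem_range, S] at hn hn'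
  obtain ⟨a, _, rfl⟩ := hn
  omega

lemma C1 {m y : ℕ} (hy : y ≤ 2^m) :
    (S (2^(m+1) + y)).card = (S (2^(m+1))).card + (S y).card := by
  rw [S_split m y (le_trans hy (Nat.pow_le_pow_right (by norm_num) (by omega)))]
  congr 1
  rw [S]
  have h : Finset.filter (fun n => NoAdjacentOnes n ∧ n.testBit m = false) (Finset.range y)
      = Finset.filter NoAdjacentOnes (Finset.range y) := by
    apply Finset.filter_congr
    intro n hn
    simp only [Finset.mem_range] at hn
    have : n.testBit m = false := Nat.testBit_lt_two_pow (by omega)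
    simp [this]
  rw [h]

lemma C2 {m y : ℕ} (h1 : 2^m ≤ y) (h2 : y ≤ 2^(m+1)) :
    (S (2^(m+1) + y)).card = (S (2^(m+1))).card + (S (2^m)).card := by
  rw [S_split m y h2]
  congr 1
  have h : Finset.filter (fun n => NoAdjacentOnes n ∧ n.testBit m = false) (Finset.range y)
      = Finset.filter NoAdjacentOnes (Finset.range (2^m)) := by
    ext n
    simp only [Finset.mem_filter, Finset.mem_range]
    constructor
    · rintro ⟨hny, hadj, hbit⟩
      refine ⟨?_, hadj⟩
      by_contra hc
      push_neg at hc
      have hbit' : n.testBit m = true := by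
        rw [Nat.testBit_eq_decide_div_mod_eq]
        have hd : n / 2^m = 1 := by
          have h2m : (2:ℕ)^(m+1) = 2 * 2^m := by ring
          apply Nat.div_eq_of_lt_le <;> omega
        simp [hd]
      rw [hbit] at hbit'
      exact Bool.false_ne_true hbit'
    · rintro ⟨hn, hadj⟩
      exact ⟨by omega, hadj, Nat.testBit_lt_two_pow hn⟩
  rw [h, S]

lemma Scard_pow : ∀ m, (S (2^m)).card = Nat.fib (m+2) := by
  intro m
  induction m using Nat.strong_induction_on with
  | _ m ih =>
    match m with
    | 0 => decide
    | 1 => decide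
    | (k+2) =>
      have h : (2:ℕ)^(k+2) = 2^(k+1) + 2^(k+1) := by ring
      rw [h, C2 (Nat.pow_le_pow_right (by norm_num) (by omega)) le_rfl,
        ih (k+1) (by omega), ih k (by omega)]
      have hf := Nat.fib_add_two (n := k+2)
      have he : k + 1 + 2 = k + 2 + 1 := by omega
      rw [he]
      omega

lemma geom_sum_Icc : ∀ M : ℕ, ∑ k ∈ Finset.Icc 1 M, 2^(k-1) = 2^M - 1 := by
  intro M
  induction M with
  | zero => simp
  | succ M ih =>
    rw [Finset.sum_Icc_succ_top (by omega), ih]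
    have : (1:ℕ) ≤ 2^M := Nat.one_le_two_pow
    simp only [Nat.add_sub_cancel]
    rw [pow_succ]
    omega

lemma sum_pow_lt (A : Finset ℕ) (hA : ∀ a ∈ A, 1 ≤ a) (M : ℕ) (hM : ∀ a ∈ A, a ≤ M) :
    ∑ k ∈ A, 2^(k-1) < 2^M := by
  have hsub : A ⊆ Finset.Icc 1 M := by
    intro a ha
    simp only [Finset.mem_Icc]
    exact ⟨hA a ha, hM a ha⟩
  calc ∑ k ∈ A, 2^(k-1) ≤ ∑ k ∈ Finset.Icc 1 M, 2^(k-1) :=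
        Finset.sum_le_sum_of_subset hsub
    _ = 2^M - 1 := geom_sum_Icc M
    _ < 2^M := by have : (1:ℕ) ≤ 2^M := Nat.one_le_two_pow; omega

def bar (A : Finset ℕ) : Finset ℕ := A.filter (fun k => ∀ j ∈ A, j + 1 ∈ A → j ≤ k)

lemma mainlem : ∀ N (A : Finset ℕ), A.card ≤ N → (∀ a ∈ A, 1 ≤ a) →
    (S (∑ k ∈ A, 2^(k-1))).card = ∑ k ∈ bar A, Nat.fib (k+1) := by
  intro N
  induction N with
  | zero =>
    intro A hcard hA
    have hAe : A = ∅ := Finset.card_eq_zero.mp (Nat.le_zero.mp hcard)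
    subst hAe
    simp [bar, S]
  | succ N ih =>
    intro A hcard hA
    rcases A.eq_empty_or_nonempty with rfl | hne
    · simp [bar, S]
    set a := A.max' hne with hadef
    have haA : a ∈ A := A.max'_mem hne
    have hamax : ∀ b ∈ A, b ≤ a := fun b hb => A.le_max' b hb
    have ha1 : 1 ≤ a := hA a haA
    set A' := A.erase a with hA'def
    have hsum : ∑ k ∈ A, 2^(k-1) = 2^(a-1) + ∑ k ∈ A', 2^(k-1) :=
      (Finset.add_sum_erase A _ haA).symm
    have hA'le : ∀ b ∈ A', b ≤ a - 1 := by
      intro b hb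
      have h1 := Finset.ne_of_mem_erase hb
      have h2 := hamax b (Finset.mem_of_mem_erase hb)
      omega
    have hA'1 : ∀ b ∈ A', 1 ≤ b := fun b hb => hA b (Finset.mem_of_mem_erase hb)
    have hx' : ∑ k ∈ A', 2^(k-1) < 2^(a-1) := sum_pow_lt A' hA'1 (a-1) hA'le
    have hcard' : A'.card ≤ N := by
      rw [hA'def, Finset.card_erase_of_mem haA]
      have : 1 ≤ A.card := Finset.card_pos.mpr hne
      omega
    by_cases ha2 : a = 1
    · have hAeq : A = {1} := by
        ext b
        simp only [Finset.mem_singleton]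
        constructor
        · intro hb; have := hA b hb; have := hamax b hb; omega
        · rintro rfl; rw [← ha2]; exact haA
      rw [hAeq]
      have hb1 : bar {1} = {1} := by decide
      rw [hb1, Finset.sum_singleton, Finset.sum_singleton]
      decide
    obtain ⟨m, hm⟩ : ∃ m, a = m + 2 := ⟨a - 2, by omega⟩
    have hpow : 2^(a-1) = 2^(m+1) := by rw [hm]; norm_num
    by_cases hprev : (a - 1) ∈ A
    · -- consecutive pair (a-1, a) at the top
      have hprev' : a - 1 ∈ A' := Finset.mem_erase.mpr ⟨by omega, hprev⟩
      have hge : 2^m ≤ ∑ k ∈ A', 2^(k-1) := by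
        have h : 2^(a-1-1) ≤ ∑ k ∈ A', 2^(k-1) :=
          Finset.single_le_sum (f := fun k => 2^(k-1)) (fun i _ => Nat.zero_le _) hprev'
        have he : a - 1 - 1 = m := by omega
        rwa [he] at h
      rw [hsum, hpow, C2 hge (by rw [← hpow]; omega), Scard_pow, Scard_pow]
      have hbar : bar A = insert (a-1) {a} := by
        ext k
        simp only [bar, Finset.mem_filter, Finset.mem_insert, Finset.mem_singleton]
        constructor
        · rintro ⟨hkA, hcond⟩
          have h1 : a - 1 ≤ k := by
            have := hcond (a-1) hprev (by rw [show a - 1 + 1 = a by omega]; exact haA)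
            exact this
          have h2 := hamax k hkA
          omega
        · rintro (rfl | rfl)
          · exact ⟨hprev, fun j hj hj1 => by have := hamax (j+1) hj1; omega⟩
          · exact ⟨haA, fun j hj hj1 => by have := hamax (j+1) hj1; omega⟩
      rw [hbar, Finset.sum_insert (by simp; omega), Finset.sum_singleton]
      have h1 : a - 1 + 1 = m + 2 := by omega
      have h2 : a + 1 = m + 3 := by omega
      have h3 : m + 1 + 2 = m + 3 := by omega
      rw [h1, h2, h3]
      omega
    · -- no element adjacent below the top
      have hA'le2 : ∀ b ∈ A', b ≤ m := by
        intro b hb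
        have h1 := hA'le b hb
        have h2 : b ≠ a - 1 := fun h => hprev (h ▸ Finset.mem_of_mem_erase hb)
        omega
      have hx'2 : ∑ k ∈ A', 2^(k-1) < 2^m := sum_pow_lt A' hA'1 m hA'le2
      rw [hsum, hpow, C1 (le_of_lt hx'2), Scard_pow, ih A' hcard' hA'1]
      have hbar : bar A = insert a (bar A') := by
        ext k
        simp only [bar, Finset.mem_filter, Finset.mem_insert, hA'def, Finset.mem_erase]
        constructor
        · rintro ⟨hkA, hcond⟩
          by_cases hka : k = a
          · exact Or.inl hka
          · refine Or.inr ⟨⟨hka, hkA⟩, fun j hj hj1 => hcond j hj.2 hj1.2⟩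
        · rintro (rfl | ⟨⟨hka, hkA⟩, hcond⟩)
          · exact ⟨haA, fun j hj hj1 => hamax j hj⟩
          · refine ⟨hkA, fun j hj hj1 => ?_⟩
            have hj1a : j + 1 ≠ a := by
              intro h
              exact hprev (by rw [show a - 1 = j by omega]; exact hj)
            have hja : j ≠ a := by
              intro h
              have := hamax (j+1) hj1
              omega
            exact hcond j ⟨hja, hj⟩ ⟨hj1a, hj1⟩
      rw [hbar, Finset.sum_insert (by simp [bar, hA'def])]
      have h2 : a + 1 = m + 3 := by omega
      have h3 : m + 1 + 2 = m + 3 := by omega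
      rw [h2, h3]


/-- Duality formula for Zeckendorf binary expansions. -/
theorem duality_formula_binary (F : ℕ → ℕ) (hF1 : F 1 = 1) (hF2 : F 2 = 2)
    (hFrec : ∀ n, 1 ≤ n → F (n + 2) = F (n + 1) + F n)
    (A Abar : Finset ℕ) (hA : ∀ a ∈ A, 1 ≤ a)
    (hAbar : ((∀ j ∈ A, j + 1 ∉ A) ∧ Abar = A) ∨
      (∃ j ∈ A, j + 1 ∈ A ∧ (∀ j' ∈ A, j' + 1 ∈ A → j' ≤ j) ∧
        Abar = A.filter (fun k => j ≤ k))) :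
    zbin (∑ k ∈ A, 2 ^ (k - 1)) = ∑ k ∈ Abar, F k := by
  have hF : ∀ k, 1 ≤ k → F k = Nat.fib (k+1) := by
    intro k
    induction k using Nat.strong_induction_on with
    | _ k ih =>
      match k with
      | 0 => intro h; omega
      | 1 => intro _; rw [hF1]; rfl
      | 2 => intro _; rw [hF2]; rfl
      | (n+3) =>
        intro _
        rw [show n+3 = (n+1)+2 from rfl, hFrec (n+1) (by omega),
          ih (n+2) (by omega) (by omega), ih (n+1) (by omega) (by omega)]
        have h := Nat.fib_add_two (n := n+2)
        have he1 : n + 1 + 1 = n + 2 := by omega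
        have he2 : n + 3 + 1 = n + 2 + 2 := by omega
        rw [he2, he1]
        omega
  have hAbar' : Abar = bar A := by
    rcases hAbar with ⟨hcons, rfl⟩ | ⟨j, hj, hj1, hjmax, rfl⟩
    · rw [bar, Finset.filter_true_of_mem]
      intro k hk j hjA hj1A
      exact absurd hj1A (hcons j hjA)
    · rw [bar]
      apply Finset.filter_congr
      intro k hk
      constructor
      · intro h j' hj' hj'1
        exact le_trans (hjmax j' hj' hj'1) h
      · intro h
        exact h j hj hj1
  rw [zbin_eq, mainlem A.card A le_rfl hA, hAbar']
  apply Finset.sum_congr rfl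
  intro k hk
  have hkA : k ∈ A := Finset.mem_of_mem_filter k hk
  rw [hF k (hA k hkA)]
end

section
/- Let L, E, θ^n, H be as in the context and let f(x) = x^N − Σ_{k=1}^{N−1} e_k x^{N−k} − (1 + e_N). Then f has a unique positive real root φ; φ > 1, φ is a simple root, its modulus strictly exceeds that of every other complex root of f, and lim_{n→∞} H_n/φ^{n−1} = (1/f′(φ)) · Σ_{k=1}^{N} (H_k/(k−1)!) · g^{(k−1)}(0), where g is the polynomial g(x) = f(x)/(x − φ) and g^{(k−1)} denotes its (k−1)st derivative. -/
open Filter Topology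

namespace Zeck

-- A coefficient function is `μ : ℕ → ℕ`; index `0` is unused (members vanish there).

/-- The maximal L-block `θ^n` at index `n-1`, for `L = (e 1, …, e N)`. -/
def maxBlock (N : ℕ) (e : ℕ → ℕ) (n : ℕ) : ℕ → ℕ :=
  fun k => if 1 ≤ k ∧ k < n then e ((n - k - 1) % N + 1) else 0

/-- A proper L-block at index `n-1` with support interval `[a, n-1]`. -/
def IsProperBlock (N : ℕ) (e : ℕ → ℕ) (ζ : ℕ → ℕ) (a n : ℕ) : Prop :=
  2 ≤ n ∧ 1 ≤ a ∧ a ≤ n - 1 ∧ (∀ j, a < j → ζ j = maxBlock N e n j) ∧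
    ζ a < maxBlock N e n a ∧ (∀ j, j < a → ζ j = 0)

/-- An L-block (proper or maximal), together with its support interval. -/
def IsBlock (N : ℕ) (e : ℕ → ℕ) (ζ : ℕ → ℕ) (I : Finset ℕ) : Prop :=
  ∃ n, 2 ≤ n ∧ ((ζ = maxBlock N e n ∧ I = Finset.Icc 1 (n - 1)) ∨
    (∃ a, IsProperBlock N e ζ a n ∧ I = Finset.Icc a (n - 1)))

/-- Membership in the periodic Zeckendorf collection for positive integers determined by L:
finite sums of L-blocks with pairwise disjoint support intervals (the zero function has `l = 0`). -/
def memColl (N : ℕ) (e : ℕ → ℕ) (μ : ℕ → ℕ) : Prop :=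
  ∃ (l : ℕ) (ζ : ℕ → ℕ → ℕ) (I : ℕ → Finset ℕ),
    (∀ i, i < l → IsBlock N e (ζ i) (I i)) ∧
    (∀ i j, i < l → j < l → i ≠ j → Disjoint (I i) (I j)) ∧
    ∀ k, μ k = ∑ i ∈ Finset.range l, ζ i k

/-- The maximal L*-block `β̄^n` at index `n`. -/
def maxStarBlock (N : ℕ) (e : ℕ → ℕ) (n : ℕ) : ℕ → ℕ :=
  fun k => if n ≤ k then e ((k - n) % N + 1) else 0

/-- A proper L*-block at index `n` with support interval `[n, b]`. -/
def IsProperStarBlock (N : ℕ) (e : ℕ → ℕ) (ζ : ℕ → ℕ) (n b : ℕ) : Prop :=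
  1 ≤ n ∧ n ≤ b ∧ (∀ j, j < b → ζ j = maxStarBlock N e n j) ∧
    ζ b < maxStarBlock N e n b ∧ (∀ j, b < j → ζ j = 0)

/-- Membership in the periodic Zeckendorf collection for `(0,1)` determined by L:
nonzero finite or infinite sums of proper L*-blocks with pairwise disjoint support intervals. -/
def memStar (N : ℕ) (e : ℕ → ℕ) (ε : ℕ → ℕ) : Prop :=
  ε ≠ 0 ∧ ∃ (l : ℕ∞) (ζ : ℕ → ℕ → ℕ) (nb : ℕ → ℕ × ℕ),
    (∀ i : ℕ, (i : ℕ∞) < l → IsProperStarBlock N e (ζ i) (nb i).1 (nb i).2) ∧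
    (∀ i j : ℕ, (i : ℕ∞) < l → (j : ℕ∞) < l → i ≠ j →
      Disjoint (Finset.Icc (nb i).1 (nb i).2) (Finset.Icc (nb j).1 (nb j).2)) ∧
    ∀ k, ε k = ∑' i : ℕ, if (i : ℕ∞) < l then ζ i k else 0

/-- A decomposition `ε = ζ^1 + … + ζ^l + μ` in which the `ζ^i` are proper L*-blocks whose
support intervals partition `[1, b]` and `μ` vanishes on `[0, b]` (`l, b` possibly infinite). -/
def DecompData (N : ℕ) (e : ℕ → ℕ) (ε : ℕ → ℕ) (l : ℕ∞) (ζ : ℕ → ℕ → ℕ)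
    (nb : ℕ → ℕ × ℕ) (b : ℕ∞) (μ : ℕ → ℕ) : Prop :=
  (∀ i : ℕ, (i : ℕ∞) < l → IsProperStarBlock N e (ζ i) (nb i).1 (nb i).2) ∧
  (∀ i j : ℕ, (i : ℕ∞) < l → (j : ℕ∞) < l → i ≠ j →
    Disjoint (Set.Icc (nb i).1 (nb i).2) (Set.Icc (nb j).1 (nb j).2)) ∧
  (⋃ i ∈ {i : ℕ | (i : ℕ∞) < l}, Set.Icc (nb i).1 (nb i).2) = {k : ℕ | 1 ≤ k ∧ (k : ℕ∞) ≤ b} ∧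
  (∀ k : ℕ, (k : ℕ∞) ≤ b → μ k = 0) ∧
  (∀ k, ε k = (∑' i : ℕ, if (i : ℕ∞) < l then ζ i k else 0) + μ k)

/-- Membership in `E̅*`. -/
def memEBar (N : ℕ) (e : ℕ → ℕ) (ε : ℕ → ℕ) : Prop :=
  memStar N e ε ∨
  ∃ (l : ℕ) (ζ : ℕ → ℕ → ℕ) (nb : ℕ → ℕ × ℕ) (b : ℕ),
    DecompData N e ε (l : ℕ∞) ζ nb (b : ℕ∞) (maxStarBlock N e (b + 1))

/-- Descending lexicographic order. -/
def dLT (a b : ℕ → ℕ) : Prop := ∃ k, a k < b k ∧ ∀ j, j < k → a j = b j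

def dLE (a b : ℕ → ℕ) : Prop := a = b ∨ dLT a b

/-- Ascending lexicographic order (on finitely supported functions). -/
def aLT (a b : ℕ → ℕ) : Prop := ∃ k, a k < b k ∧ ∀ j, k < j → a j = b j

/-- The basis coefficient function `β^b`. -/
def betaUnit (b : ℕ) : ℕ → ℕ := fun k => if k = b then 1 else 0

/-- The relation `η = rev̄(ε)`. -/
def RevBar (N : ℕ) (e : ℕ → ℕ) (ε η : ℕ → ℕ) : Prop :=
  (dLE (maxStarBlock N e 1) ε ∧ η = maxStarBlock N e 1) ∨
  (dLT ε (maxStarBlock N e 1) ∧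
    ((memStar N e ε ∧ η = ε) ∨
     ∃ (l : ℕ) (ζ : ℕ → ℕ → ℕ) (nb : ℕ → ℕ × ℕ) (b : ℕ) (μ : ℕ → ℕ),
       DecompData N e ε (l : ℕ∞) ζ nb (b : ℕ∞) μ ∧
       ((dLT (maxStarBlock N e (b + 1)) μ ∧
           η = fun k => (∑ i ∈ Finset.range l, ζ i k) + betaUnit b k) ∨
        (μ = maxStarBlock N e (b + 1) ∧ η = ε))))

/-- `Σ_k ε_k w^k` as a real number. -/
noncomputable def evalReal (ε : ℕ → ℕ) (w : ℝ) : ℝ := ∑' k : ℕ, (ε k : ℝ) * w ^ k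

/-- `Σ_k ε_k H_k` (finitely supported `ε`). -/
noncomputable def evalNat (ε H : ℕ → ℕ) : ℕ := ∑' k : ℕ, ε k * H k

/-- The counting function `z`. -/
noncomputable def zfun (N : ℕ) (e : ℕ → ℕ) (Ht : ℕ → ℕ) (x : ℕ) : ℕ :=
  Set.ncard {m : ℕ | m < x ∧ ∃ ε, memColl N e ε ∧ m = evalNat ε Ht}

/-- Characteristic polynomial of `L` for positive integers. -/
noncomputable def fchar (N : ℕ) (e : ℕ → ℕ) (x : ℝ) : ℝ :=
  x ^ N - (∑ k ∈ Finset.Ico 1 N, (e k : ℝ) * x ^ (N - k)) - (1 + (e N : ℝ))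

/-- Characteristic polynomial of `L` for `(0,1)`. -/
noncomputable def gchar (N : ℕ) (e : ℕ → ℕ) (x : ℝ) : ℝ :=
  -1 + (∑ k ∈ Finset.Ico 1 N, (e k : ℝ) * x ^ k) + (1 + (e N : ℝ)) * x ^ N

end Zeck

open Zeck Filter Polynomial

/-!
Put `G(w) = ∑_{1 ≤ k < N} e_k w^k + (1 + e_N) w^N` (`Zeck.recipSum`), so that
`f(x) = x^N (1 - G(1/x))` for `x ≠ 0`. Since `G` has nonnegative coefficients, it increases
strictly on `[0, ∞)` from `G(0) = 0` to `G(1) > 1`, so `f` has exactly one positive root `φ`, and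
`1/φ ∈ (0, 1)`. For a complex root `z`, `1 = Re G(1/z) ≤ G(‖1/z‖)`, strictly unless `1/z` is a
positive real (as `e_1 > 0`), whence `‖z‖ < φ` for `z ≠ φ`. Simplicity comes from
`φ f'(φ) = N f(φ) + ∑ k e_k φ^(N-k) + N (1 + e_N) > 0`.

The sequence `u_n = H_(n+1)` satisfies `f(S) u = 0`, `S` the shift. With `g = f / (X - φ)`, the
sequence `g(S) u` is killed by `S - φ`, hence geometric, so `r = u - c φ^n` satisfies `g(S) r = 0`
for `c = (g(S) u)_0 / g(φ)`. All roots of `g` have modulus `< φ`; splitting them off one at a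
time gives `r_n = o(φ^n)`. Finally `g(φ) = f'(φ)` and `(g(S) u)_0 = ∑ u_k g^(k)(0) / k!`.
-/

open Asymptotics

section SeqShift

variable {R : Type*} [CommRing R]

variable (R) in
def seqShift : Module.End R (ℕ → R) := LinearMap.funLeft R R Nat.succ

theorem seqShift_pow_apply (k : ℕ) (u : ℕ → R) (n : ℕ) : (seqShift R ^ k) u n = u (n + k) := by
  induction k generalizing u with
  | zero => rfl
  | succ k ih => rw [pow_succ, Module.End.mul_apply, ih]; rfl

theorem aeval_seqShift_apply (p : R[X]) (u : ℕ → R) (n : ℕ) :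
    aeval (seqShift R) p u n = ∑ j ∈ Finset.range (p.natDegree + 1), p.coeff j * u (n + j) := by
  simp [aeval_eq_sum_range, seqShift_pow_apply]

theorem aeval_seqShift_X_sub_C_apply (a : R) (u : ℕ → R) (n : ℕ) :
    aeval (seqShift R) (X - C a) u n = u (n + 1) - a * u n := by
  simp [seqShift, LinearMap.funLeft_apply]

theorem aeval_seqShift_geom (p : R[X]) (x : R) :
    aeval (seqShift R) p (x ^ ·) = p.eval x • (x ^ ·) := by
  ext n
  simp only [aeval_seqShift_apply, eval_eq_sum_range, Pi.smul_apply, smul_eq_mul, Finset.sum_mul]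
  exact Finset.sum_congr rfl fun j _ => by ring

theorem aeval_seqShift_map {S : Type*} [CommRing S] {f : R →+* S} (hf : Function.Injective f)
    (p : R[X]) (u : ℕ → R) :
    aeval (seqShift S) (p.map f) (f ∘ u) = f ∘ aeval (seqShift R) p u := by
  ext n
  simp [aeval_seqShift_apply, natDegree_map_eq_of_injective hf]

theorem eq_smul_geom_of_aeval_seqShift_X_sub_C {a : R} {w : ℕ → R}
    (hw : aeval (seqShift R) (X - C a) w = 0) : w = w 0 • (a ^ ·) := by
  ext n
  induction n with
  | zero => simp
  | succ n ih =>
    have hstep := congrFun hw n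
    rw [aeval_seqShift_X_sub_C_apply] at hstep
    simp only [Pi.smul_apply, smul_eq_mul] at ih ⊢
    rw [sub_eq_zero.1 hstep, ih]; ring

theorem aeval_seqShift_sub_smul_geom_eq_zero {K : Type*} [Field K] {g : K[X]} {a : K}
    (hga : g.eval a ≠ 0) {u : ℕ → K} (hu : aeval (seqShift K) ((X - C a) * g) u = 0) :
    aeval (seqShift K) g (u - (aeval (seqShift K) g u 0 / g.eval a) • (a ^ ·)) = 0 := by
  have hgeom := eq_smul_geom_of_aeval_seqShift_X_sub_C (w := aeval (seqShift K) g u)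
    (by rwa [← Module.End.mul_apply, ← map_mul])
  rw [map_sub, map_smul, aeval_seqShift_geom, smul_smul, div_mul_cancel₀ _ hga, ← hgeom, sub_self]

end SeqShift

theorem tendsto_zero_of_le_mul_add {q : ℝ} (hq0 : 0 ≤ q) (hq1 : q < 1) {a b : ℕ → ℝ}
    (ha : ∀ n, 0 ≤ a n) (hb : Tendsto b atTop (𝓝 0)) (hab : ∀ n, a (n + 1) ≤ q * a n + b n) :
    Tendsto a atTop (𝓝 0) := by
  refine tendsto_order.2 ⟨fun c hc => .of_forall fun n => hc.trans_le (ha n), fun ε hε => ?_⟩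
  obtain ⟨K, hK⟩ := eventually_atTop.1
    (hb.eventually (ge_mem_nhds (show 0 < (1 - q) * (ε / 2) by nlinarith)))
  have hcontract : ∀ m, a (K + m) ≤ q ^ m * a K + ε / 2 := by
    intro m
    induction m with
    | zero => rw [add_zero, pow_zero, one_mul]; linarith
    | succ m ih =>
      calc a (K + (m + 1)) ≤ q * a (K + m) + b (K + m) := hab (K + m)
        _ ≤ q * (q ^ m * a K + ε / 2) + (1 - q) * (ε / 2) := by
          gcongr; exact hK _ (Nat.le_add_right K m)
        _ = q ^ (m + 1) * a K + ε / 2 := by ring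
  have hpow : Tendsto (fun m => q ^ m * a K) atTop (𝓝 0) := by
    simpa using (tendsto_pow_atTop_nhds_zero_of_lt_one hq0 hq1).mul_const (a K)
  obtain ⟨M, hM⟩ := eventually_atTop.1 (hpow.eventually (gt_mem_nhds (half_pos hε)))
  refine eventually_atTop.2 ⟨K + M, fun n hn => ?_⟩
  obtain ⟨m, rfl⟩ := Nat.exists_eq_add_of_le (le_of_add_le_left hn)
  linarith [hcontract m, hM m (by omega)]

theorem isLittleO_pow_iff_tendsto_norm_div {E : Type*} [SeminormedAddCommGroup E] {ρ : ℝ}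
    (hρ : 0 < ρ) {u : ℕ → E} :
    u =o[atTop] (ρ ^ ·) ↔ Tendsto (fun n => ‖u n‖ / ρ ^ n) atTop (𝓝 0) := by
  rw [← isLittleO_norm_left, isLittleO_iff_tendsto']
  exact .of_forall fun n h => absurd h (pow_ne_zero n hρ.ne')

theorem isLittleO_pow_of_isLittleO_sub_mul {E : Type*} [SeminormedRing E] {z : E} {ρ : ℝ}
    (hz : ‖z‖ < ρ) {u : ℕ → E} (h : (fun n => u (n + 1) - z * u n) =o[atTop] (ρ ^ ·)) :
    u =o[atTop] (ρ ^ ·) := by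
  have hρ : 0 < ρ := (norm_nonneg z).trans_lt hz
  rw [isLittleO_pow_iff_tendsto_norm_div hρ] at h ⊢
  refine tendsto_zero_of_le_mul_add (by positivity) ((div_lt_one hρ).2 hz)
    (fun n => by positivity) (by simpa using h.div_const ρ) fun n => ?_
  have hstep : ‖u (n + 1)‖ ≤ ‖z‖ * ‖u n‖ + ‖u (n + 1) - z * u n‖ :=
    calc ‖u (n + 1)‖ ≤ ‖z * u n‖ + ‖u (n + 1) - z * u n‖ := norm_le_insert' _ _
      _ ≤ ‖z‖ * ‖u n‖ + ‖u (n + 1) - z * u n‖ := by gcongr; exact norm_mul_le _ _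
  have hρn : 0 < ρ ^ n := pow_pos hρ n
  rw [pow_succ, div_le_iff₀ (by positivity)]
  calc ‖u (n + 1)‖ ≤ ‖z‖ * ‖u n‖ + ‖u (n + 1) - z * u n‖ := hstep
    _ = _ := by field_simp

theorem isLittleO_pow_of_aeval_seqShift_eq_zero {p : ℂ[X]} (hp : p ≠ 0) {ρ : ℝ}
    (hroots : ∀ z, p.IsRoot z → ‖z‖ < ρ) {u : ℕ → ℂ} (hu : aeval (seqShift ℂ) p u = 0) :
    u =o[atTop] (ρ ^ ·) := by
  induction hdeg : p.natDegree generalizing p u with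
  | zero =>
    rw [eq_C_of_natDegree_eq_zero hdeg] at hu hp
    have : u = 0 := by simpa [aeval_C, Algebra.algebraMap_eq_smul_one, C_ne_zero.1 hp] using hu
    exact this ▸ isLittleO_zero _ _
  | succ d ih =>
    obtain ⟨z, hz⟩ :=
      Complex.exists_root (natDegree_pos_iff_degree_pos.1 (by rw [hdeg]; exact d.succ_pos))
    set q := p /ₘ (X - C z)
    have hfac : (X - C z) * q = p := mul_divByMonic_eq_iff_isRoot.2 hz
    have hq : q ≠ 0 := by rintro h; rw [h, mul_zero] at hfac; exact hp hfac.symm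
    have hqroots : ∀ w, q.IsRoot w → ‖w‖ < ρ := fun w hw =>
      hroots w (hw.dvd ⟨X - C z, by rw [← hfac, mul_comm]⟩)
    have hqdeg : q.natDegree = d := by
      rw [natDegree_divByMonic _ (monic_X_sub_C z), hdeg, natDegree_X_sub_C, Nat.add_sub_cancel]
    have ht : aeval (seqShift ℂ) q (aeval (seqShift ℂ) (X - C z) u) = 0 := by
      rw [← Module.End.mul_apply, ← map_mul, mul_comm, hfac, hu]
    exact isLittleO_pow_of_isLittleO_sub_mul (hroots z hz)
      ((ih hq hqroots ht hqdeg).congr_left (aeval_seqShift_X_sub_C_apply z u))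

theorem tendsto_div_pow_of_aeval_seqShift_eq_zero {P : ℝ[X]} {φ : ℝ} (hφ : 0 < φ)
    (hroot : P.IsRoot φ) (hsimple : P.derivative.eval φ ≠ 0)
    (hdom : ∀ z : ℂ, (P.map (algebraMap ℝ ℂ)).eval z = 0 → z ≠ φ → ‖z‖ < φ)
    {u : ℕ → ℝ} (hu : aeval (seqShift ℝ) P u = 0) :
    Tendsto (fun n => u n / φ ^ n) atTop
      (𝓝 (aeval (seqShift ℝ) (P /ₘ (X - C φ)) u 0 / P.derivative.eval φ)) := by
  set g := P /ₘ (X - C φ)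
  have hfac : (X - C φ) * g = P := mul_divByMonic_eq_iff_isRoot.2 hroot
  have hgφ : g.eval φ = P.derivative.eval φ := by
    simpa using
      congrArg (eval φ) (divByMonic_add_X_sub_C_mul_derivative_divByMonic_eq_derivative P φ)
  set c := aeval (seqShift ℝ) g u 0 / P.derivative.eval φ
  set r : ℕ → ℝ := u - c • (φ ^ ·)
  have hr : aeval (seqShift ℝ) g r = 0 := by
    have := aeval_seqShift_sub_smul_geom_eq_zero (hgφ ▸ hsimple) (hfac ▸ hu)
    rwa [hgφ] at this
  have hgC : g.map (algebraMap ℝ ℂ) ≠ 0 := by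
    refine (Polynomial.map_ne_zero_iff (algebraMap ℝ ℂ).injective).2 ?_
    rintro hg; rw [hg, eval_zero] at hgφ; exact hsimple hgφ.symm
  have hgroots : ∀ z, (g.map (algebraMap ℝ ℂ)).IsRoot z → ‖z‖ < φ := by
    intro z hz
    refine hdom z ?_ ?_
    · rw [← hfac, Polynomial.map_mul, eval_mul, hz.eq_zero, mul_zero]
    · rintro rfl
      have : algebraMap ℝ ℂ (g.eval φ) = 0 := by
        rw [← aeval_algebraMap_apply_eq_algebraMap_eval, ← eval_map_algebraMap]; exact hz
      rw [hgφ, map_eq_zero] at this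
      exact hsimple this
  have hrC : aeval (seqShift ℂ) (g.map (algebraMap ℝ ℂ)) (algebraMap ℝ ℂ ∘ r) = 0 := by
    rw [aeval_seqShift_map (algebraMap ℝ ℂ).injective, hr]
    exact funext fun _ => map_zero _
  have hlim : Tendsto (fun n => r n / φ ^ n + c) atTop (𝓝 c) := by
    simpa using (Complex.isLittleO_ofReal_left.1
      (isLittleO_pow_of_aeval_seqShift_eq_zero hgC hgroots hrC)).tendsto_div_nhds_zero.add_const c
  refine hlim.congr' (.of_forall fun n => ?_)
  simp only [r, Pi.sub_apply, Pi.smul_apply, smul_eq_mul]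
  field_simp
  ring

theorem rootMultiplicity_eq_one_of_not_isRoot_derivative {R : Type*} [CommRing R] {p : R[X]}
    {t : R} (hroot : p.IsRoot t) (hder : ¬(derivative p).IsRoot t) : p.rootMultiplicity t = 1 := by
  have hp : p ≠ 0 := by rintro rfl; simp at hder
  have hpos := (rootMultiplicity_pos hp).2 hroot
  have hle := mt (one_lt_rootMultiplicity_iff_isRoot hp).1 fun h => hder h.2
  omega

theorem aeval_seqShift_apply_zero_eq_sum {K : Type*} [Field K] [CharZero K] {p : K[X]} {N : ℕ}
    (hp : p.natDegree < N) (u : ℕ → K) :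
    aeval (seqShift K) p u 0 =
      ∑ k ∈ Finset.range N, u k / k.factorial * (derivative^[k] p).eval 0 := by
  simp only [aeval_eq_sum_range' hp (seqShift K), LinearMap.sum_apply, Finset.sum_apply,
    LinearMap.smul_apply, Pi.smul_apply, smul_eq_mul, seqShift_pow_apply, zero_add,
    ← coeff_zero_eq_eval_zero, coeff_iterate_derivative, Nat.descFactorial_self, nsmul_eq_mul]
  refine Finset.sum_congr rfl fun k _ => ?_
  field_simp [Nat.cast_ne_zero.2 k.factorial_ne_zero]

namespace Zeck

section CharPoly

noncomputable def charPoly (R : Type*) [CommRing R] (N : ℕ) (e : ℕ → ℕ) : R[X] :=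
  X ^ N - (∑ k ∈ Finset.Ico 1 N, C (e k : R) * X ^ (N - k)) - C (1 + (e N : R))

def recipSum {R : Type*} [Semiring R] (N : ℕ) (e : ℕ → ℕ) (w : R) : R :=
  ∑ k ∈ Finset.Ico 1 N, (e k : R) * w ^ k + (1 + e N) * w ^ N

variable {R : Type*} [CommRing R] {N : ℕ} {e : ℕ → ℕ}

theorem eval_charPoly (x : R) :
    (charPoly R N e).eval x =
      x ^ N - ∑ k ∈ Finset.Ico 1 N, (e k : R) * x ^ (N - k) - (1 + e N) := by
  simp [charPoly, eval_finsetSum]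

variable (N e) in
theorem map_charPoly {S : Type*} [CommRing S] (f : R →+* S) :
    (charPoly R N e).map f = charPoly S N e := by
  simp [charPoly, Polynomial.map_sum]

theorem natDegree_charPoly_le : (charPoly R N e).natDegree ≤ N := by
  have hsum : (∑ k ∈ Finset.Ico 1 N, C (e k : R) * X ^ (N - k)).natDegree ≤ N :=
    natDegree_sum_le_of_forall_le _ _ fun k _ => (natDegree_C_mul_X_pow_le _ _).trans (N.sub_le k)
  refine (natDegree_sub_le_of_le (natDegree_sub_le_of_le (natDegree_X_pow_le N) hsum)
    ((natDegree_C _).trans_le N.zero_le)).trans ?_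
  simp

theorem eval_charPoly_eq_mul_recipSum {K : Type*} [Field K] {x : K} (hx : x ≠ 0) :
    (charPoly K N e).eval x = x ^ N * (1 - recipSum N e x⁻¹) := by
  have hpow : ∀ k ≤ N, x ^ N * x⁻¹ ^ k = x ^ (N - k) := fun k hk => by
    rw [inv_pow, pow_sub₀ x hx hk]
  have hsum : ∑ k ∈ Finset.Ico 1 N, x ^ N * ((e k : K) * x⁻¹ ^ k) =
      ∑ k ∈ Finset.Ico 1 N, (e k : K) * x ^ (N - k) :=
    Finset.sum_congr rfl fun k hk => by rw [mul_left_comm, hpow k (Finset.mem_Ico.1 hk).2.le]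
  rw [eval_charPoly, recipSum, mul_sub, mul_one, mul_add, Finset.mul_sum, hsum, mul_left_comm,
    hpow N le_rfl, Nat.sub_self, pow_zero, mul_one]
  ring

theorem eval_zero_charPoly (hN : 1 ≤ N) : (charPoly R N e).eval 0 = -(1 + e N) := by
  have hsum : ∑ k ∈ Finset.Ico 1 N, (e k : R) * 0 ^ (N - k) = 0 := Finset.sum_eq_zero fun k hk => by
    rw [zero_pow (by have := (Finset.mem_Ico.1 hk).2; omega), mul_zero]
  rw [eval_charPoly, hsum, zero_pow (by omega), sub_zero, zero_sub]

theorem isRoot_charPoly_iff {K : Type*} [Field K] [CharZero K] (hN : 1 ≤ N) {x : K} :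
    (charPoly K N e).IsRoot x ↔ x ≠ 0 ∧ recipSum N e x⁻¹ = 1 := by
  rcases eq_or_ne x 0 with rfl | hx
  · rw [IsRoot, eval_zero_charPoly hN, neg_eq_zero]
    exact iff_of_false (by norm_cast; omega) fun h => h.1 rfl
  · rw [IsRoot, eval_charPoly_eq_mul_recipSum hx, mul_eq_zero, sub_eq_zero, eq_comm]
    simp [eq_comm (a := (1 : K)), hx, (pow_ne_zero N hx).symm]

theorem recipSum_zero (hN : 1 ≤ N) : recipSum N e (0 : R) = 0 := by
  have hsum : ∑ k ∈ Finset.Ico 1 N, (e k : R) * 0 ^ k = 0 := Finset.sum_eq_zero fun k hk => by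
    rw [zero_pow (by have := (Finset.mem_Ico.1 hk).1; omega), mul_zero]
  simp [recipSum, hsum, zero_pow (by omega : N ≠ 0)]

theorem ofReal_recipSum (x : ℝ) : ((recipSum N e x : ℝ) : ℂ) = recipSum N e (x : ℂ) := by
  simp [recipSum]

theorem continuous_recipSum : Continuous (recipSum N e : ℝ → ℝ) := by
  unfold recipSum; fun_prop

theorem strictMonoOn_recipSum (hN : 1 ≤ N) :
    StrictMonoOn (recipSum N e : ℝ → ℝ) (Set.Ici 0) := by
  intro x hx y _ hxy
  have hsum : ∑ k ∈ Finset.Ico 1 N, (e k : ℝ) * x ^ k ≤ ∑ k ∈ Finset.Ico 1 N, (e k : ℝ) * y ^ k :=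
    Finset.sum_le_sum fun k _ => by gcongr
  have hlast : (1 + (e N : ℝ)) * x ^ N < (1 + e N) * y ^ N := by
    gcongr
  exact add_lt_add_of_le_of_lt hsum hlast

theorem one_lt_recipSum_one (hN : 2 ≤ N) (he : 1 ≤ e 1) : 1 < recipSum N e (1 : ℝ) := by
  have h1 : (e 1 : ℝ) ≤ ∑ k ∈ Finset.Ico 1 N, (e k : ℝ) :=
    Finset.single_le_sum (f := fun k => (e k : ℝ)) (fun k _ => (e k).cast_nonneg)
      (Finset.mem_Ico.2 ⟨le_rfl, by omega⟩)
  have he' : (1 : ℝ) ≤ e 1 := by exact_mod_cast he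
  simp only [recipSum, one_pow, mul_one]
  linarith [(e N).cast_nonneg (α := ℝ)]

theorem exists_forall_pos_isRoot_charPoly_iff (hN : 2 ≤ N) (he : 1 ≤ e 1) :
    ∃ φ : ℝ, 1 < φ ∧ ∀ x, 0 < x → ((charPoly ℝ N e).IsRoot x ↔ x = φ) := by
  obtain ⟨w, ⟨hw0, hw1⟩, hw⟩ : ∃ w ∈ Set.Ioo (0 : ℝ) 1, recipSum N e w = 1 :=
    intermediate_value_Ioo zero_le_one continuous_recipSum.continuousOn
      ⟨by rw [recipSum_zero (by omega)]; exact one_pos, one_lt_recipSum_one hN he⟩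
  refine ⟨w⁻¹, (one_lt_inv₀ hw0).2 hw1, fun x hx => ?_⟩
  rw [isRoot_charPoly_iff (by omega), ← hw,
    (strictMonoOn_recipSum (by omega)).injOn.eq_iff (inv_nonneg.2 hx.le) hw0.le,
    inv_eq_iff_eq_inv]
  exact and_iff_right hx.ne'

theorem re_recipSum_lt (hN : 2 ≤ N) (he : 1 ≤ e 1) {w : ℂ} (hw : w ≠ ‖w‖) :
    (recipSum N e w).re < recipSum N e ‖w‖ := by
  have hre : w.re < ‖w‖ := by
    refine (Complex.re_le_norm w).lt_of_ne fun h => hw ?_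
    open ComplexOrder in
    rw [← h, ← Complex.eq_re_of_ofReal_le (r := 0) (by simpa using Complex.re_eq_norm.1 h)]
  have hterm : ∀ {c : ℝ}, 0 ≤ c → ∀ k, c * (w ^ k).re ≤ c * ‖w‖ ^ k := fun hc k => by
    rw [← norm_pow]; gcongr; exact Complex.re_le_norm _
  have he1 : (0 : ℝ) < e 1 := by exact_mod_cast he
  simp only [recipSum, Complex.add_re, Complex.re_sum, Complex.mul_re, Complex.natCast_re,
    Complex.add_im, Complex.natCast_im, Complex.one_re, Complex.one_im, add_zero, zero_mul,
    sub_zero]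
  refine add_lt_add_of_lt_of_le (Finset.sum_lt_sum (fun k _ => hterm (e k).cast_nonneg k)
    ⟨1, Finset.mem_Ico.2 ⟨le_rfl, by omega⟩, ?_⟩) (hterm (by positivity) N)
  simpa only [pow_one] using mul_lt_mul_of_pos_left hre he1

theorem norm_lt_of_isRoot_charPoly (hN : 2 ≤ N) (he : 1 ≤ e 1) {φ : ℝ} (hφ : 0 < φ)
    (hφroot : (charPoly ℝ N e).IsRoot φ) {z : ℂ} (hz : (charPoly ℂ N e).IsRoot z)
    (hne : z ≠ φ) : ‖z‖ < φ := by
  obtain ⟨-, hφ1⟩ := (isRoot_charPoly_iff (by omega)).1 hφroot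
  obtain ⟨hz0, hz1⟩ := (isRoot_charPoly_iff (by omega)).1 hz
  have hmono := strictMonoOn_recipSum (N := N) (e := e) (by omega)
  by_cases hw : z⁻¹ = ‖z⁻¹‖
  · refine absurd ?_ hne
    have hnorm : ‖z⁻¹‖ = φ⁻¹ := by
      refine hmono.injOn (norm_nonneg _) (inv_nonneg.2 hφ.le) ?_
      rw [hφ1, ← Complex.ofReal_inj, ofReal_recipSum, ← hw, hz1, Complex.ofReal_one]
    rw [← inv_inj, hw, hnorm, Complex.ofReal_inv]
  · have hlt : recipSum N e φ⁻¹ < recipSum N e ‖z⁻¹‖ := by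
      rw [hφ1, ← Complex.one_re, ← hz1]
      exact re_recipSum_lt hN he hw
    rw [← inv_lt_inv₀ hφ (norm_pos_iff.2 hz0), ← norm_inv]
    exact (hmono.lt_iff_lt (inv_nonneg.2 hφ.le) (norm_nonneg _)).1 hlt

theorem mul_eval_derivative_charPoly (x : R) :
    x * (derivative (charPoly R N e)).eval x = N * (charPoly R N e).eval x +
      ∑ k ∈ Finset.Ico 1 N, (k * e k : R) * x ^ (N - k) + N * (1 + e N) := by
  have hterm : ∀ m : ℕ, x * (m * x ^ (m - 1)) = m * x ^ m := fun m => by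
    rcases m with _ | m
    · simp
    · rw [Nat.add_sub_cancel, mul_left_comm, ← pow_succ']
  have hsum : x * ∑ k ∈ Finset.Ico 1 N, (e k : R) * ((N - k : ℕ) * x ^ (N - k - 1)) =
      ∑ k ∈ Finset.Ico 1 N, ((N : R) - k) * e k * x ^ (N - k) := by
    rw [Finset.mul_sum]
    refine Finset.sum_congr rfl fun k hk => ?_
    rw [mul_left_comm, hterm, Nat.cast_sub (Finset.mem_Ico.1 hk).2.le]
    ring
  simp only [charPoly, derivative_sub, derivative_sum, derivative_C_mul, derivative_X_pow,
    derivative_C, sub_zero, eval_sub, eval_finsetSum, eval_mul, eval_C, eval_pow, eval_X,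
    mul_sub, hterm, hsum]
  simp only [sub_mul, Finset.sum_sub_distrib, Finset.mul_sum, mul_assoc]
  ring

theorem eval_derivative_charPoly_pos (hN : 1 ≤ N) {φ : ℝ} (hφ : 0 < φ)
    (hroot : (charPoly ℝ N e).IsRoot φ) : 0 < (derivative (charPoly ℝ N e)).eval φ := by
  refine pos_of_mul_pos_right ?_ hφ.le
  rw [mul_eval_derivative_charPoly, hroot.eq_zero, mul_zero, zero_add]
  have : 0 ≤ ∑ k ∈ Finset.Ico 1 N, (k * e k : ℝ) * φ ^ (N - k) :=
    Finset.sum_nonneg fun k _ => by positivity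
  have : (0 : ℝ) < N := by exact_mod_cast hN
  positivity

theorem aeval_seqShift_charPoly_apply (u : ℕ → R) (n : ℕ) :
    aeval (seqShift R) (charPoly R N e) u n =
      u (n + N) - ∑ k ∈ Finset.Ico 1 N, (e k : R) * u (n + (N - k)) - (1 + e N) * u n := by
  simp [charPoly, seqShift_pow_apply, Finset.sum_apply, add_mul]

end CharPoly

theorem maxBlock_add_of_lt {N : ℕ} (e : ℕ → ℕ) {n k : ℕ} (hk : k < n) :
    maxBlock N e (n + N) k = maxBlock N e n k := by
  unfold maxBlock
  by_cases h1 : 1 ≤ k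
  · rw [if_pos ⟨h1, by omega⟩, if_pos ⟨h1, hk⟩, show n + N - k - 1 = n - k - 1 + N by omega,
      Nat.add_mod_right]
  · rw [if_neg (by omega), if_neg (by omega)]

theorem maxBlock_add_sub {N : ℕ} (e : ℕ → ℕ) {n j : ℕ} (hn : 1 ≤ n) (hj : 1 ≤ j) (hjN : j ≤ N) :
    maxBlock N e (n + N) (n + N - j) = e j := by
  unfold maxBlock
  rw [if_pos ⟨by omega, by omega⟩, show n + N - (n + N - j) - 1 = j - 1 by omega,
    Nat.mod_eq_of_lt (by omega), Nat.sub_add_cancel hj]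

theorem fundamental_linear_recurrence {N : ℕ} {e : ℕ → ℕ} {H : ℕ → ℕ} (hN : 1 ≤ N) (hH1 : H 1 = 1)
    (hHrec : ∀ n, 2 ≤ n → H n = 1 + ∑ k ∈ Finset.Ico 1 n, maxBlock N e n k * H k)
    {n : ℕ} (hn : 1 ≤ n) :
    H (n + N) = ∑ k ∈ Finset.Ico 1 N, e k * H (n + (N - k)) + (1 + e N) * H n := by
  have hlow : 1 + ∑ k ∈ Finset.Ico 1 n, maxBlock N e (n + N) k * H k = H n := by
    rw [Finset.sum_congr rfl fun k hk => by rw [maxBlock_add_of_lt e (Finset.mem_Ico.1 hk).2]]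
    rcases (show n = 1 ∨ 2 ≤ n by omega) with rfl | hn2
    · simp [hH1]
    · exact (hHrec n hn2).symm
  have hhigh : ∑ j ∈ Finset.Ico 1 (N + 1), e j * H (n + (N - j)) =
      ∑ k ∈ Finset.Ico n (n + N), maxBlock N e (n + N) k * H k := by
    refine Finset.sum_nbij' (fun j => n + N - j) (fun k => n + N - k) ?_ ?_ ?_ ?_ ?_ <;>
      intro j hj <;> rw [Finset.mem_Ico] at hj
    · rw [Finset.mem_Ico]; omega
    · rw [Finset.mem_Ico]; omega
    · omega
    · omega
    · rw [maxBlock_add_sub e hn hj.1 (by omega), show n + (N - j) = n + N - j by omega]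
  rw [hHrec (n + N) (by omega), ← Finset.sum_Ico_consecutive _ hn (Nat.le_add_right n N),
    ← add_assoc, hlow, ← hhigh, Finset.sum_Ico_succ_top (by omega), Nat.sub_self, add_zero]
  ring

theorem aeval_seqShift_charPoly_fundamental_eq_zero {R : Type*} [CommRing R] {N : ℕ}
    {e : ℕ → ℕ} {H : ℕ → ℕ} (hN : 1 ≤ N) (hH1 : H 1 = 1)
    (hHrec : ∀ n, 2 ≤ n → H n = 1 + ∑ k ∈ Finset.Ico 1 n, maxBlock N e n k * H k) :
    aeval (seqShift R) (charPoly R N e) (fun m => (H (m + 1) : R)) = 0 := by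
  ext n
  have := fundamental_linear_recurrence hN hH1 hHrec (Nat.le_add_left 1 n)
  rw [aeval_seqShift_charPoly_apply, Pi.zero_apply, sub_sub, sub_eq_zero]
  simp only [Nat.add_right_comm n _ 1, this]
  push_cast
  ring

end Zeck

/-- The characteristic polynomial of `L` has a unique positive real root `φ`; it is `> 1`,
simple, strictly dominates the modulus of all other complex roots, and
`H_n/φ^(n-1)` tends to `(1/f'(φ)) Σ_{k=1}^N (H_k/(k-1)!) g^{(k-1)}(0)` where `g = f/(x-φ)`. -/
theorem fundamental_sequence_binet (N : ℕ) (e : ℕ → ℕ) (hN : 2 ≤ N) (he : 1 ≤ e 1)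
    (H : ℕ → ℕ) (hH1 : H 1 = 1)
    (hHrec : ∀ n, 2 ≤ n → H n = 1 + ∑ k ∈ Finset.Ico 1 n, maxBlock N e n k * H k)
    (P : Polynomial ℝ)
    (hP : P = X ^ N - (∑ k ∈ Finset.Ico 1 N, C (e k : ℝ) * X ^ (N - k))
      - C (1 + (e N : ℝ))) :
    (∃! x : ℝ, 0 < x ∧ P.eval x = 0) ∧
    ∀ φ : ℝ, 0 < φ → P.eval φ = 0 →
      1 < φ ∧ P.rootMultiplicity φ = 1 ∧
      (∀ z : ℂ, (P.map (algebraMap ℝ ℂ)).eval z = 0 → z ≠ (φ : ℂ) → ‖z‖ < φ) ∧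
      Filter.Tendsto (fun n : ℕ => (H n : ℝ) / φ ^ (n - 1)) Filter.atTop
        (nhds ((1 / P.derivative.eval φ) *
          ∑ k ∈ Finset.Icc 1 N, (H k : ℝ) / (Nat.factorial (k - 1) : ℝ) *
            ((fun q : Polynomial ℝ => Polynomial.derivative q)^[k - 1]
              (P /ₘ (X - C φ))).eval 0)) := by
  obtain rfl : P = charPoly ℝ N e := hP
  obtain ⟨φ₀, hφ₀, hroots⟩ := exists_forall_pos_isRoot_charPoly_iff hN he
  refine ⟨⟨φ₀, ⟨by linarith, (hroots φ₀ (by linarith)).2 rfl⟩, fun x hx => (hroots x hx.1).1 hx.2⟩,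
    fun φ hφ hφroot => ?_⟩
  obtain rfl := (hroots φ hφ).1 hφroot
  have hD := eval_derivative_charPoly_pos (by omega) hφ hφroot
  have hdom : ∀ z : ℂ, ((charPoly ℝ N e).map (algebraMap ℝ ℂ)).eval z = 0 → z ≠ φ → ‖z‖ < φ := by
    rw [map_charPoly]
    exact fun z hz hne => norm_lt_of_isRoot_charPoly hN he hφ hφroot hz hne
  refine ⟨hφ₀, rootMultiplicity_eq_one_of_not_isRoot_derivative hφroot hD.ne', hdom, ?_⟩
  have hdeg : (charPoly ℝ N e /ₘ (X - C φ)).natDegree < N := by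
    rw [natDegree_divByMonic _ (monic_X_sub_C φ), natDegree_X_sub_C]
    have := natDegree_charPoly_le (R := ℝ) (N := N) (e := e)
    omega
  have hlim := tendsto_div_pow_of_aeval_seqShift_eq_zero hφ hφroot hD.ne' hdom
    (aeval_seqShift_charPoly_fundamental_eq_zero (by omega) hH1 hHrec)
  rw [aeval_seqShift_apply_zero_eq_sum hdeg, div_eq_inv_mul, ← one_div] at hlim
  rw [← Finset.Ico_add_one_right_eq_Icc, Finset.sum_Ico_eq_sum_range, Nat.add_sub_cancel]
  simp only [add_comm 1]
  refine (hlim.comp (tendsto_sub_atTop_nat 1)).congr' ?_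
  filter_upwards [eventually_ge_atTop 1] with n hn
  simp [Function.comp, Nat.sub_add_cancel hn]
end

section
/- Let L, E, θ^n, H be as in the context, let f(x) = x^N − Σ_{k=1}^{N−1} e_k x^{N−k} − (1 + e_N), and let φ be its unique positive real root. If B is a real number with B ≠ φ such that H_k = B^{k−1} for 1 ≤ k ≤ N, then lim_{n→∞} H_n/φ^{n−1} = f(B)/((B − φ)·f′(φ)). -/
open Filter Topology

open Zeck Filter

/-!
Put `u n = H (n + 1)`. Periodicity of the maximal blocks gives
`u (n + N) = Σ_{j<N} b j * u (n + j)` with `b 0 = 1 + e N`, `b j = e (N - j)`, whose characteristic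
polynomial is `f`; the geometric initial values force `e 1 = ⋯ = e (N - 1) = B - 1 ≥ 1`, so every
`b j` is positive. Then `u n / φ ^ n` is a weighted average of its `N` predecessors with positive
weights, hence converges: the maxima over windows of length `N` decrease, the minima increase, and
their gap contracts by a fixed factor every `N` steps. Writing `f = (X - φ) q`, the combination
`Σ_j q_j u (n + j)` equals `φ ^ n` times its initial value `q(B)`, and dividing by `φ ^ n` shows the
limit is `q(B) / q(φ) = f(B) / ((B - φ) f'(φ))`.
-/

open Finset Polynomial Topology

section WeightedAverage

variable {N : ℕ} {a w : ℕ → ℝ}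

theorem sum_mul_le_sub_mul_of_le {x : ℕ → ℝ} {M ε : ℝ} {j₀ : ℕ} (hj₀ : j₀ < N)
    (ha : ∀ j < N, 0 ≤ a j) (hsum : ∑ j ∈ range N, a j = 1)
    (hx : ∀ j < N, x j ≤ M) (hx₀ : x j₀ ≤ M - ε) :
    ∑ j ∈ range N, a j * x j ≤ M - a j₀ * ε := by
  calc ∑ j ∈ range N, a j * x j
      ≤ ∑ j ∈ range N, a j * (M - if j = j₀ then ε else 0) := by
        refine sum_le_sum fun j hj => mul_le_mul_of_nonneg_left ?_ (ha j (mem_range.1 hj))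
        split_ifs with h
        · exact h ▸ hx₀
        · simpa using hx j (mem_range.1 hj)
    _ = M - a j₀ * ε := by
        simp [mul_sub, ← sum_mul, hsum, mul_ite, sum_ite_eq', hj₀]

variable (N) in
noncomputable def windowMax (hN : 0 < N) (w : ℕ → ℝ) (n : ℕ) : ℝ :=
  (range N).sup' (nonempty_range_iff.2 hN.ne') fun j => w (n + j)

variable (N) in
noncomputable def windowMin (hN : 0 < N) (w : ℕ → ℝ) (n : ℕ) : ℝ :=
  -windowMax N hN (-w) n

variable (hN : 0 < N)

theorem le_windowMax {n j : ℕ} (hj : j < N) : w (n + j) ≤ windowMax N hN w n :=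
  le_sup' (fun j => w (n + j)) (mem_range.2 hj)

theorem windowMin_le {n j : ℕ} (hj : j < N) : windowMin N hN w n ≤ w (n + j) :=
  neg_le.1 (le_windowMax (w := -w) hN hj)

theorem exists_eq_windowMin (n : ℕ) : ∃ j < N, w (n + j) = windowMin N hN w n := by
  obtain ⟨j, hj, h⟩ := exists_mem_eq_sup' (nonempty_range_iff.2 hN.ne') fun j => (-w) (n + j)
  exact ⟨j, mem_range.1 hj, by rw [windowMin, windowMax, h, Pi.neg_apply, neg_neg]⟩

theorem windowMin_le_windowMax (n : ℕ) : windowMin N hN w n ≤ windowMax N hN w n :=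
  (windowMin_le hN (j := 0) hN).trans (le_windowMax hN hN)

omit hN in
theorem neg_eq_wsum (hw : ∀ n, w (n + N) = ∑ j ∈ range N, a j * w (n + j)) (n : ℕ) :
    (-w) (n + N) = ∑ j ∈ range N, a j * (-w) (n + j) := by
  simp [hw, sum_neg_distrib]

variable (ha : ∀ j < N, 0 ≤ a j) (hsum : ∑ j ∈ range N, a j = 1)
  (hw : ∀ n, w (n + N) = ∑ j ∈ range N, a j * w (n + j))
include ha hsum hw

theorem le_windowMax_of_le {n t : ℕ} (ht : n ≤ t) : w t ≤ windowMax N hN w n := by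
  induction t using Nat.strong_induction_on with
  | _ t ih =>
    by_cases htN : t < n + N
    · simpa [Nat.add_sub_cancel' ht] using le_windowMax (w := w) hN (n := n) (j := t - n) (by omega)
    · obtain ⟨s, rfl⟩ : ∃ s, t = s + N := ⟨t - N, by omega⟩
      calc w (s + N) = ∑ j ∈ range N, a j * w (s + j) := hw s
        _ ≤ ∑ j ∈ range N, a j * windowMax N hN w n := sum_le_sum fun j hj =>
            mul_le_mul_of_nonneg_left (ih _ (by simp at hj; omega) (by omega))
              (ha j (by simpa using hj))
        _ = windowMax N hN w n := by rw [← sum_mul, hsum, one_mul]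

theorem windowMax_antitone : Antitone (windowMax N hN w) :=
  antitone_nat_of_succ_le fun n =>
    sup'_le _ _ fun j _ => le_windowMax_of_le hN ha hsum hw (by omega)

theorem windowMin_monotone : Monotone (windowMin N hN w) :=
  fun _ _ h => neg_le_neg (windowMax_antitone hN ha hsum (neg_eq_wsum hw) h)

omit ha in
/-- The `i`-th value after the window gives weight at least `δ` to the window's minimum (`i = 0`)
or to the previous value, so it lies at least `δ ^ (i + 1) (M - m)` below the maximum `M`. -/
theorem windowMax_add_le {δ : ℝ} (hδ : 0 < δ) (hδa : ∀ j < N, δ ≤ a j) (n : ℕ) :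
    windowMax N hN w (n + N) ≤
      windowMax N hN w n - δ ^ N * (windowMax N hN w n - windowMin N hN w n) := by
  have ha : ∀ j < N, 0 ≤ a j := fun j hj => hδ.le.trans (hδa j hj)
  set M := windowMax N hN w n
  set m := windowMin N hN w n
  have hmM : 0 ≤ M - m := sub_nonneg.2 (windowMin_le_windowMax hN n)
  have hδ1 : δ ≤ 1 := (hδa 0 hN).trans <|
    hsum ▸ single_le_sum (fun j hj => ha j (mem_range.1 hj)) (mem_range.2 hN)
  have key : ∀ i < N, w (n + N + i) ≤ M - δ ^ (i + 1) * (M - m) := by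
    intro i
    induction i with
    | zero =>
      intro _
      obtain ⟨s, hs, hws⟩ := exists_eq_windowMin (w := w) hN n
      calc w (n + N + 0) = ∑ j ∈ range N, a j * w (n + j) := hw n
        _ ≤ M - a s * (M - m) := sum_mul_le_sub_mul_of_le hs ha hsum
            (fun j hj => le_windowMax hN hj) (by rw [hws]; linarith)
        _ ≤ M - δ ^ (0 + 1) * (M - m) := by gcongr; simpa using hδa s hs
    | succ i ih =>
      intro hi
      calc w (n + N + (i + 1)) = ∑ j ∈ range N, a j * w (n + (i + 1) + j) := by
            rw [← hw]; ring_nf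
        _ ≤ M - a (N - 1) * (δ ^ (i + 1) * (M - m)) := sum_mul_le_sub_mul_of_le (by omega) ha hsum
            (fun j hj => le_windowMax_of_le hN ha hsum hw (by omega))
            (by convert ih (by omega) using 2; omega)
        _ ≤ M - δ ^ (i + 1 + 1) * (M - m) := by
            rw [pow_succ' δ (i + 1), mul_assoc]
            exact sub_le_sub_left (mul_le_mul_of_nonneg_right (hδa (N - 1) (by omega))
              (mul_nonneg (pow_nonneg hδ.le _) hmM)) M
  refine sup'_le _ _ fun i hi => (key i (mem_range.1 hi)).trans ?_
  exact sub_le_sub_left (mul_le_mul_of_nonneg_right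
    (pow_le_pow_of_le_one hδ.le hδ1 (mem_range.1 hi)) hmM) M

omit ha hw hsum in
theorem exists_tendsto_of_eq_wsum (ha : ∀ j < N, 0 < a j) (hsum : ∑ j ∈ range N, a j = 1)
    (hw : ∀ n, w (n + N) = ∑ j ∈ range N, a j * w (n + j)) : ∃ L, Tendsto w atTop (𝓝 L) := by
  have hN : 0 < N := Nat.pos_of_ne_zero <| by rintro rfl; simp at hsum
  have ha₀ : ∀ j < N, 0 ≤ a j := fun j hj => (ha j hj).le
  set M := windowMax N hN w
  set m := windowMin N hN w
  have hManti : Antitone M := windowMax_antitone hN ha₀ hsum hw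
  have hmmono : Monotone m := windowMin_monotone hN ha₀ hsum hw
  have hmM : ∀ n, m n ≤ M n := windowMin_le_windowMax hN
  have hM : Tendsto M atTop (𝓝 (⨅ n, M n)) := tendsto_atTop_ciInf hManti
    ⟨m 0, by rintro _ ⟨n, rfl⟩; exact (hmmono n.zero_le).trans (hmM n)⟩
  have hm : Tendsto m atTop (𝓝 (⨆ n, m n)) := tendsto_atTop_ciSup hmmono
    ⟨M 0, by rintro _ ⟨n, rfl⟩; exact (hmM n).trans (hManti n.zero_le)⟩
  set δ := (range N).inf' (nonempty_range_iff.2 hN.ne') a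
  have hδ : 0 < δ := (lt_inf'_iff _).2 fun j hj => ha j (mem_range.1 hj)
  have hcontract : ⨅ n, M n ≤ (⨅ n, M n) - δ ^ N * ((⨅ n, M n) - ⨆ n, m n) :=
    le_of_tendsto_of_tendsto' (hM.comp (tendsto_add_atTop_nat N))
      (hM.sub ((hM.sub hm).const_mul _)) fun n =>
        windowMax_add_le hN hsum hw hδ (fun j hj => inf'_le a (mem_range.2 hj)) n
  have hlim : ⨆ n, m n = ⨅ n, M n := le_antisymm (le_of_tendsto_of_tendsto' hm hM hmM) <| by
    nlinarith [pow_pos hδ N]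
  refine ⟨⨅ n, M n, tendsto_of_tendsto_of_tendsto_of_le_of_le (hlim ▸ hm) hM
    (fun n => by simpa using windowMin_le (w := w) hN (n := n) hN)
    (fun n => by simpa using le_windowMax (w := w) hN (n := n) hN)⟩

end WeightedAverage

section Shift

variable {R : Type*} [CommRing R]

def shift : Module.End R (ℕ → R) := LinearMap.funLeft R R Nat.succ

theorem shift_pow_apply (u : ℕ → R) (i n : ℕ) : (shift ^ i) u n = u (n + i) := by
  induction i generalizing n with
  | zero => rfl
  | succ i ih =>
    rw [pow_succ', Module.End.mul_apply]
    exact (ih (n + 1)).trans (congrArg u (by omega))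

theorem aeval_shift_apply {p : R[X]} {d : ℕ} (hp : p.natDegree < d) (u : ℕ → R) (n : ℕ) :
    aeval shift p u n = ∑ j ∈ range d, p.coeff j * u (n + j) := by
  simp [aeval_eq_sum_range' hp, LinearMap.sum_apply, shift_pow_apply]

theorem aeval_shift_divByMonic_apply {p : R[X]} {φ : R} (hp : p.IsRoot φ) {u : ℕ → R}
    (hu : aeval shift p u = 0) (n : ℕ) :
    aeval shift (p /ₘ (X - C φ)) u n = φ ^ n * aeval shift (p /ₘ (X - C φ)) u 0 := by
  set V := aeval shift (p /ₘ (X - C φ)) u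
  have hV : ∀ n, V (n + 1) = φ * V n := fun n => by
    have h := congrArg (fun T : Module.End R (ℕ → R) => T u n)
      (congrArg (aeval shift) (mul_divByMonic_eq_iff_isRoot.2 hp))
    simp only [map_mul, map_sub, aeval_X, aeval_C, Module.End.mul_apply, LinearMap.sub_apply,
      hu, Pi.zero_apply, Pi.sub_apply, Module.algebraMap_end_apply, Pi.smul_apply, smul_eq_mul] at h
    exact sub_eq_zero.1 h
  induction n with
  | zero => simp
  | succ n ih => rw [hV, ih, pow_succ']; ring

end Shift

section Recurrence

variable {R : Type*} [CommRing R]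

noncomputable def recPoly (N : ℕ) (b : ℕ → R) : R[X] := X ^ N - ∑ j ∈ range N, C (b j) * X ^ j

@[simp]
theorem eval_recPoly (N : ℕ) (b : ℕ → R) (x : R) :
    (recPoly N b).eval x = x ^ N - ∑ j ∈ range N, b j * x ^ j := by
  simp [recPoly, eval_finsetSum]

theorem coeff_recPoly_of_lt {N j : ℕ} (b : ℕ → R) (hj : j < N) : (recPoly N b).coeff j = -b j := by
  simp [recPoly, coeff_C_mul, coeff_X_pow, hj.ne, hj]

theorem natDegree_recPoly_le (N : ℕ) (b : ℕ → R) : (recPoly N b).natDegree ≤ N :=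
  (natDegree_sub_le _ _).trans <| max_le (natDegree_X_pow_le N) <|
    natDegree_sum_le_of_forall_le _ _ fun _ hj =>
      (natDegree_C_mul_X_pow_le _ _).trans (mem_range.1 hj).le

theorem natDegree_recPoly_divByMonic_lt [Nontrivial R] {N : ℕ} (hN : 0 < N) (b : ℕ → R) (φ : R) :
    (recPoly N b /ₘ (X - C φ)).natDegree < N := by
  rw [natDegree_divByMonic _ (monic_X_sub_C φ), natDegree_X_sub_C]
  have := natDegree_recPoly_le N b
  omega

theorem aeval_shift_recPoly {N : ℕ} {b u : ℕ → R}
    (hu : ∀ n, u (n + N) = ∑ j ∈ range N, b j * u (n + j)) : aeval shift (recPoly N b) u = 0 := by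
  ext n
  simp [recPoly, LinearMap.sum_apply, shift_pow_apply, hu]

end Recurrence

section PositiveRecurrence

variable {N : ℕ} {b u : ℕ → ℝ} {φ : ℝ}

/-- Synthetic division: `φ q₀ = b₀` and `φ q_{j+1} = q_j + b_{j+1}`. -/
theorem coeff_recPoly_divByMonic_pos (hb : ∀ j < N, 0 < b j) (hφ : 0 < φ)
    (hroot : (recPoly N b).IsRoot φ) {j : ℕ} (hj : j < N) :
    0 < (recPoly N b /ₘ (X - C φ)).coeff j := by
  set q := recPoly N b /ₘ (X - C φ)
  have hq : q * (X - C φ) = recPoly N b := by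
    rw [mul_comm]; exact mul_divByMonic_eq_iff_isRoot.2 hroot
  induction j with
  | zero =>
    have h := congrArg (coeff · 0) hq
    simp only [mul_coeff_zero, coeff_sub, coeff_X_zero, coeff_C_zero, coeff_recPoly_of_lt b hj] at h
    nlinarith [hb 0 hj]
  | succ j ih =>
    have h := congrArg (coeff · (j + 1)) hq
    simp only [coeff_mul_X_sub_C, coeff_recPoly_of_lt b hj] at h
    nlinarith [hb (j + 1) hj, ih (by omega)]

theorem eval_recPoly_divByMonic_pos (hb : ∀ j < N, 0 < b j) (hφ : 0 < φ)
    (hroot : (recPoly N b).IsRoot φ) : 0 < (recPoly N b /ₘ (X - C φ)).eval φ := by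
  have hN : 0 < N := Nat.pos_of_ne_zero <| by rintro rfl; simp [IsRoot] at hroot
  rw [eval_eq_sum_range' (natDegree_recPoly_divByMonic_lt hN b φ)]
  exact sum_pos (fun j hj => mul_pos (coeff_recPoly_divByMonic_pos hb hφ hroot (mem_range.1 hj))
    (pow_pos hφ j)) (nonempty_range_iff.2 hN.ne')

/-- `u n / φ ^ n` is a weighted average of its `N` predecessors with weights `b j φ ^ j / φ ^ N`,
so it converges to some `L`; since `Σ_j q_j u (n + j) = φ ^ n Σ_j q_j u j`, dividing by `φ ^ n`
gives `q(φ) L = Σ_j q_j u j`. -/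
theorem tendsto_div_pow_of_recurrence (hb : ∀ j < N, 0 < b j) (hφ : 0 < φ)
    (hroot : (recPoly N b).IsRoot φ) (hu : ∀ n, u (n + N) = ∑ j ∈ range N, b j * u (n + j)) :
    Tendsto (fun n => u n / φ ^ n) atTop
      (𝓝 (aeval shift (recPoly N b /ₘ (X - C φ)) u 0 / (recPoly N b /ₘ (X - C φ)).eval φ)) := by
  set q := recPoly N b /ₘ (X - C φ)
  have hN : 0 < N := Nat.pos_of_ne_zero <| by rintro rfl; simp [IsRoot] at hroot
  have hq := natDegree_recPoly_divByMonic_lt hN b φ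
  have hφN : φ ^ N = ∑ j ∈ range N, b j * φ ^ j := by simpa [sub_eq_zero] using hroot
  obtain ⟨L, hL⟩ := exists_tendsto_of_eq_wsum (w := fun n => u n / φ ^ n)
    (a := fun j => b j * φ ^ j / φ ^ N)
    (fun j hj => by have := hb j hj; positivity)
    (by rw [← sum_div, ← hφN, div_self (pow_pos hφ N).ne'])
    (fun n => by
      simp only [hu n, sum_div]
      refine sum_congr rfl fun j _ => ?_
      field_simp
      ring)
  have hV : ∀ n, aeval shift q u 0 =
      ∑ j ∈ range N, q.coeff j * φ ^ j * (u (n + j) / φ ^ (n + j)) := fun n => by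
    rw [← mul_div_cancel_left₀ (aeval shift q u 0) (pow_ne_zero n hφ.ne'),
      ← aeval_shift_divByMonic_apply hroot (aeval_shift_recPoly hu), aeval_shift_apply hq, sum_div]
    refine sum_congr rfl fun j _ => ?_
    field_simp
    ring
  have hlim : aeval shift q u 0 = q.eval φ * L := by
    refine tendsto_nhds_unique (f := fun n => ∑ j ∈ range N,
      q.coeff j * φ ^ j * (u (n + j) / φ ^ (n + j))) (l := atTop)
      (tendsto_const_nhds.congr hV) ?_
    rw [eval_eq_sum_range' hq, sum_mul]
    exact tendsto_finsetSum _ fun j _ => (hL.comp (tendsto_add_atTop_nat j)).const_mul _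
  rwa [hlim, mul_div_cancel_left₀ _ (eval_recPoly_divByMonic_pos hb hφ hroot).ne']

theorem tendsto_div_pow_of_recurrence_of_eq_pow (hb : ∀ j < N, 0 < b j) (hφ : 0 < φ)
    (hroot : (recPoly N b).IsRoot φ) (hu : ∀ n, u (n + N) = ∑ j ∈ range N, b j * u (n + j))
    {B : ℝ} (hB : B ≠ φ) (huB : ∀ j < N, u j = B ^ j) :
    Tendsto (fun n => u n / φ ^ n) atTop
      (𝓝 ((recPoly N b).eval B / ((B - φ) * (derivative (recPoly N b)).eval φ))) := by
  set q := recPoly N b /ₘ (X - C φ)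
  have hN : 0 < N := Nat.pos_of_ne_zero <| by rintro rfl; simp [IsRoot] at hroot
  have hq := natDegree_recPoly_divByMonic_lt hN b φ
  have hnum : (recPoly N b).eval B = (B - φ) * q.eval B := by
    conv_lhs => rw [← mul_divByMonic_eq_iff_isRoot.2 hroot]
    simp [q]
  have hden : (derivative (recPoly N b)).eval φ = q.eval φ := by
    rw [← divByMonic_add_X_sub_C_mul_derivative_divByMonic_eq_derivative _ φ]
    simp [q]
  have hV : aeval shift q u 0 = q.eval B := by
    rw [aeval_shift_apply hq, eval_eq_sum_range' hq]
    exact sum_congr rfl fun j hj => by rw [zero_add, huB j (mem_range.1 hj)]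
  rw [hnum, hden, mul_div_mul_left _ _ (sub_ne_zero.2 hB), ← hV]
  exact tendsto_div_pow_of_recurrence hb hφ hroot hu

end PositiveRecurrence

namespace Zeck

/-- The coefficient of `H (n + j)` in `H (n + N) = Σ_{j<N} b j * H (n + j)`: it is `e (N - j)`,
plus `1` for the oldest term. -/
def recCoeff (N : ℕ) (e : ℕ → ℕ) (j : ℕ) : ℕ := e (N - j) + if j = 0 then 1 else 0

theorem fchar_eq_eval_recPoly {N : ℕ} (hN : 0 < N) (e : ℕ → ℕ) (x : ℝ) :
    fchar N e x = (recPoly N fun j => (recCoeff N e j : ℝ)).eval x := by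
  have hrefl : ∑ j ∈ range N, (e (N - j) : ℝ) * x ^ j =
      ∑ k ∈ Ico 1 N, (e k : ℝ) * x ^ (N - k) + e N := by
    set f := fun k => (e k : ℝ) * x ^ (N - k)
    calc ∑ j ∈ range N, (e (N - j) : ℝ) * x ^ j = ∑ j ∈ Ico 0 N, f (N - j) := by
          rw [range_eq_Ico]
          exact sum_congr rfl fun j hj => by simp only [f, Nat.sub_sub_self (mem_Ico.1 hj).2.le]
      _ = ∑ k ∈ Ico 1 (N + 1), f k := by simpa using sum_Ico_reflect f 0 (Nat.le_succ N)
      _ = ∑ k ∈ Ico 1 N, f k + e N := by simp [sum_Ico_succ_top (show 1 ≤ N from hN), f]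
  simp only [fchar, eval_recPoly, recCoeff, Nat.cast_add, Nat.cast_ite, Nat.cast_one,
    Nat.cast_zero, add_mul, ite_mul, one_mul, zero_mul, sum_add_distrib, sum_ite_eq',
    mem_range.2 hN, if_true, pow_zero, hrefl]
  ring

section FundamentalSequence

variable {N : ℕ} {e H : ℕ → ℕ} (hH1 : H 1 = 1)
  (hHrec : ∀ n, 2 ≤ n → H n = 1 + ∑ k ∈ Finset.Ico 1 n, maxBlock N e n k * H k)
include hH1 hHrec

theorem fundamental_succ (m : ℕ) :
    H (m + 1) = 1 + ∑ i ∈ range m, e ((m - i - 1) % N + 1) * H (i + 1) := by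
  rcases Nat.eq_zero_or_pos m with rfl | hm
  · simpa using hH1
  rw [hHrec (m + 1) (by omega), sum_Ico_eq_sum_range, Nat.add_sub_cancel]
  refine congrArg _ (sum_congr rfl fun i hi => ?_)
  rw [maxBlock, if_pos (by simp at hi; omega), add_comm 1 i, Nat.add_sub_add_right]

theorem fundamental_of_lt {m : ℕ} (hm : m < N) :
    H (m + 1) = 1 + ∑ i ∈ range m, e (m - i) * H (i + 1) := by
  rw [fundamental_succ hH1 hHrec]
  refine congrArg _ (sum_congr rfl fun i hi => ?_)
  rw [Nat.mod_eq_of_lt (by omega)]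
  congr 2
  simp at hi
  omega

theorem fundamental_add_period (hN : 0 < N) (n : ℕ) :
    H (n + N + 1) = ∑ j ∈ range N, recCoeff N e j * H (n + j + 1) := by
  simp only [recCoeff, add_mul, ite_mul, one_mul, zero_mul, sum_add_distrib, sum_ite_eq',
    mem_range.2 hN, if_true, add_zero]
  rw [fundamental_succ hH1 hHrec, sum_range_add, ← add_assoc, add_comm _ (H _),
    fundamental_succ hH1 hHrec n]
  congr 1
  · refine congrArg _ (sum_congr rfl fun i hi => ?_)
    rw [show n + N - i - 1 = n - i - 1 + N by simp at hi; omega, Nat.add_mod_right]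
  · refine sum_congr rfl fun j hj => ?_
    rw [show n + N - (n + j) - 1 = N - j - 1 by omega, Nat.mod_eq_of_lt (by omega)]
    congr 2
    simp at hj
    omega

/-- Comparing the recurrences at `m + 1` and `m` gives
`B ^ (m + 1) = 1 + e (m + 1) + B (B ^ m - 1)`. -/
theorem entry_eq_sub_one_of_eq_pow {B : ℝ} (hHB : ∀ m < N, (H (m + 1) : ℝ) = B ^ m) {t : ℕ}
    (ht : 1 ≤ t) (htN : t < N) : (e t : ℝ) = B - 1 := by
  obtain ⟨m, rfl⟩ : ∃ m, t = m + 1 := ⟨t - 1, by omega⟩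
  have hsucc := congrArg (Nat.cast (R := ℝ)) (fundamental_of_lt hH1 hHrec htN)
  have hm := congrArg (Nat.cast (R := ℝ)) (fundamental_of_lt hH1 hHrec (m := m) (by omega))
  push_cast at hsucc hm
  rw [sum_range_succ'] at hsucc
  have hshift : ∑ i ∈ range m, (e (m + 1 - (i + 1)) : ℝ) * H (i + 1 + 1) =
      B * ∑ i ∈ range m, (e (m - i) : ℝ) * H (i + 1) := by
    rw [mul_sum]
    refine sum_congr rfl fun i hi => ?_
    rw [hHB (i + 1) (by simp at hi; omega), hHB i (by simp at hi; omega), Nat.add_sub_add_right]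
    ring
  rw [hshift, hHB _ htN] at hsucc
  rw [hHB m (by omega)] at hm
  simp only [Nat.sub_zero, zero_add, hH1, Nat.cast_one, mul_one] at hsucc
  linear_combination -hsucc + B * hm

theorem recCoeff_pos_of_eq_pow (he : 1 ≤ e 1) {B : ℝ} (hHB : ∀ m < N, (H (m + 1) : ℝ) = B ^ m)
    {j : ℕ} (hj : j < N) : 0 < (recCoeff N e j : ℝ) := by
  rcases Nat.eq_zero_or_pos j with rfl | hj0
  · simp only [recCoeff, if_true]
    positivity
  · have h1 : (e 1 : ℝ) = B - 1 := entry_eq_sub_one_of_eq_pow hH1 hHrec hHB le_rfl (by omega)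
    simp only [recCoeff, hj0.ne', if_false, add_zero,
      entry_eq_sub_one_of_eq_pow hH1 hHrec hHB (t := N - j) (by omega) (by omega), ← h1]
    exact_mod_cast he

end FundamentalSequence

end Zeck

/-- If the initial values of the fundamental sequence are powers of some real `B ≠ φ`,
then `H_n/φ^(n-1)` tends to `f(B)/((B-φ)·f'(φ))`. -/
theorem fundamental_sequence_binet_geometric (N : ℕ) (e : ℕ → ℕ) (hN : 2 ≤ N) (he : 1 ≤ e 1)
    (H : ℕ → ℕ) (hH1 : H 1 = 1)
    (hHrec : ∀ n, 2 ≤ n → H n = 1 + ∑ k ∈ Finset.Ico 1 n, maxBlock N e n k * H k)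
    (f : ℝ → ℝ) (hf : f = fun x : ℝ =>
      x ^ N - (∑ k ∈ Finset.Ico 1 N, (e k : ℝ) * x ^ (N - k)) - (1 + (e N : ℝ)))
    (φ : ℝ) (hφpos : 0 < φ) (hφroot : f φ = 0)
    (B : ℝ) (hB : B ≠ φ) (hHB : ∀ k, 1 ≤ k → k ≤ N → (H k : ℝ) = B ^ (k - 1)) :
    Filter.Tendsto (fun n : ℕ => (H n : ℝ) / φ ^ (n - 1)) Filter.atTop
      (nhds (f B / ((B - φ) * deriv f φ))) := by
  have hHB' : ∀ m < N, (H (m + 1) : ℝ) = B ^ m := fun m hm => by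
    simpa using hHB (m + 1) (by omega) (by omega)
  have hfP : f = fun x => (recPoly N fun j => (recCoeff N e j : ℝ)).eval x :=
    hf ▸ funext (fchar_eq_eval_recPoly (by omega) e)
  have hu : ∀ n, (H (n + N + 1) : ℝ) = ∑ j ∈ range N, (recCoeff N e j : ℝ) * H (n + j + 1) :=
    fun n => by exact_mod_cast fundamental_add_period hH1 hHrec (by omega) n
  rw [hfP, Polynomial.deriv, ← tendsto_add_atTop_iff_nat 1]
  simpa using tendsto_div_pow_of_recurrence_of_eq_pow
    (fun j => recCoeff_pos_of_eq_pow hH1 hHrec he hHB') hφpos (by simpa [hfP] using hφroot)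
    hu hB hHB'
end

section
/- Let γ be a real number with 0 < γ < 1 and let x, y, Δx, Δy be positive real numbers such that γ·(y/x) < Δy/Δx. Then y/x^γ < (y + Δy)/(x + Δx)^γ. -/
/-- The key comparison inequality: if `0 < γ < 1` and `γ·(y/x) < Δy/Δx`, then
`y/x^γ < (y + Δy)/(x + Δx)^γ`. -/
theorem rpow_ratio_increase (γ x y Δx Δy : ℝ)
    (hγ0 : 0 < γ) (hγ1 : γ < 1)
    (hx : 0 < x) (hy : 0 < y) (hΔx : 0 < Δx) (hΔy : 0 < Δy)
    (h : γ * (y / x) < Δy / Δx) :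
    y / x ^ γ < (y + Δy) / (x + Δx) ^ γ := by
  have hxγ : (0:ℝ) < x ^ γ := Real.rpow_pos_of_pos hx γ
  have hxd : (0:ℝ) < x + Δx := by linarith
  have hxdγ : (0:ℝ) < (x + Δx) ^ γ := Real.rpow_pos_of_pos hxd γ
  rw [div_lt_div_iff₀ hxγ hxdγ]
  have hsplit : x + Δx = x * (1 + Δx / x) := by field_simp
  have hb : (1 + Δx / x) ^ γ ≤ 1 + γ * (Δx / x) :=
    rpow_one_add_le_one_add_mul_self (by have := div_pos hΔx hx; linarith : (-1:ℝ) ≤ Δx / x) hγ0.le hγ1.le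
  have hkey : γ * (Δx / x) < Δy / y := by
    rw [← mul_div_assoc] at h ⊢
    rw [div_lt_div_iff₀ hx hΔx] at h
    rw [div_lt_div_iff₀ hx hy]
    nlinarith
  calc y * (x + Δx) ^ γ = y * (x ^ γ * (1 + Δx / x) ^ γ) := by
        rw [hsplit, Real.mul_rpow hx.le (by positivity)]
    _ ≤ y * (x ^ γ * (1 + γ * (Δx / x))) := by
        have : (0:ℝ) < y * x ^ γ := by positivity
        nlinarith
    _ < y * (x ^ γ * (1 + Δy / y)) := by
        have : (0:ℝ) < y * x ^ γ := by positivity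
        nlinarith
    _ = (y + Δy) * x ^ γ := by field_simp
end

section
/- Assume the context (two periodic Zeckendorf collections with E ⊊ Ẽ). Then φ < φ̃. Moreover there exist positive real numbers α, α̃ and a real number r < 1 such that H_n = α·φ^{n−1} + O(φ^{rn}) and H̃_n = α̃·φ̃^{n−1} + O(φ̃^{rn}) as n → ∞, and, with γ = ln φ / ln φ̃ (so 0 < γ < 1), lim_{n→∞} H_n / (H̃_n)^γ = α/α̃^γ > 0. -/
open Filter Topology

open Zeck Filter Asymptotics

/-!
Write `d = (e_1, …, e_N, e_1, …)` and `d̃` for the periodic digit words of `L` and `L̃`; the root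
equation says exactly that `Σ_i d_i φ^{-(i+1)} = 1`, and likewise for `d̃` at `φ̃`. Every maximal
`L`-block lies in `Ẽ`, and greedy necessity in `Ẽ` shows that a word all of whose prefixes lie in
`Ẽ` either is `d̃` or drops below `d̃` at its first difference, after which the rest of the word
again has all its prefixes in `Ẽ`. Since `E ≠ Ẽ`, the word `d` really does drop, and each drop
costs more than the rest of the word can recover, so the value of `d` at `φ̃⁻¹` is strictly below
its value `1` at `φ⁻¹`; as the value increases with the argument, `φ < φ̃`.

By periodicity of the digits, `H_{q+N+1} = H_{q+1} + Σ_{i<N} e_{N-i} H_{q+1+i}`. Dividing by `φ^q`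
turns this into `u_{q+N} = Σ_{i<N} p_i u_{q+i}`; the root equation makes the weights `p_i` sum to
`1`, and `p_0, p_{N-1} > 0`. The spread of `u` over a window of length `N` then shrinks by a fixed
factor every `2N` steps, so `u` converges geometrically to some `α > 0`. This gives the `O`-bounds,
and `φ̃^γ = φ` turns the ratio into `(H_n / φ^{n-1}) / (H̃_n / φ̃^{n-1})^γ`.
-/

open Topology

namespace Zeck

open Finset

variable {N M : ℕ} {e et : ℕ → ℕ}

def digit (N : ℕ) (e : ℕ → ℕ) (i : ℕ) : ℕ := e (i % N + 1)

theorem maxBlock_of_lt {n k : ℕ} (hk : 1 ≤ k) (hkn : k < n) :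
    maxBlock N e n k = digit N e (n - k - 1) :=
  if_pos ⟨hk, hkn⟩

theorem maxBlock_of_le {n k : ℕ} (hnk : n ≤ k) : maxBlock N e n k = 0 :=
  if_neg fun h => by omega

theorem digit_zero : digit N e 0 = e 1 := by
  simp [digit]

theorem digit_add_period (i : ℕ) : digit N e (i + N) = digit N e i := by
  simp [digit]

theorem digit_mul_period (q : ℕ) : digit N e (q * N) = e 1 := by
  simp [digit]

theorem digit_of_lt {i : ℕ} (hi : i < N) : digit N e i = e (i + 1) := by
  rw [digit, Nat.mod_eq_of_lt hi]

theorem digit_le_sup (hN : 0 < N) (i : ℕ) :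
    digit N e i ≤ (range N).sup fun j => e (j + 1) :=
  le_sup (f := fun j => e (j + 1)) (mem_range.2 (Nat.mod_lt i hN))

theorem memColl_eq_of_digit_eq (h : digit N e = digit M et) : memColl N e = memColl M et := by
  have hmax : maxBlock N e = maxBlock M et := by
    funext n k
    exact congrArg (fun d : ℕ → ℕ => if 1 ≤ k ∧ k < n then d (n - k - 1) else 0) h
  unfold memColl IsBlock IsProperBlock
  rw [hmax]

theorem memColl_zero : memColl N e 0 :=
  ⟨0, fun _ => 0, fun _ => ∅, by simp, by simp, by simp⟩

theorem memColl_maxBlock {n : ℕ} (hn : 2 ≤ n) : memColl N e (maxBlock N e n) :=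
  ⟨1, fun _ => maxBlock N e n, fun _ => Icc 1 (n - 1),
    fun _ _ => ⟨n, hn, Or.inl ⟨rfl, rfl⟩⟩, fun i j hi hj hij => by omega, by simp⟩

theorem IsBlock.mem_of_ne_zero {ζ : ℕ → ℕ} {I : Finset ℕ} (hb : IsBlock N e ζ I) {k : ℕ}
    (hk : ζ k ≠ 0) : k ∈ I := by
  obtain ⟨n, -, ⟨rfl, rfl⟩ | ⟨a, ⟨-, -, han, habove, -, hbelow⟩, rfl⟩⟩ := hb
  · by_contra hkI
    exact hk (if_neg fun h => hkI (by simp only [mem_Icc]; omega))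
  · simp only [mem_Icc]
    by_contra hkI
    rcases Nat.lt_or_ge k a with hka | hka
    · exact hk (hbelow k hka)
    · exact hk ((habove k (by omega)).trans (maxBlock_of_le (by omega)))

theorem memColl_sum_erase {l i₀ : ℕ} {ζ : ℕ → ℕ → ℕ} {I : ℕ → Finset ℕ}
    (hbl : ∀ i, i < l → IsBlock N e (ζ i) (I i))
    (hdis : ∀ i j, i < l → j < l → i ≠ j → Disjoint (I i) (I j)) (hi₀ : i₀ < l) :
    memColl N e fun k => ∑ i ∈ (range l).erase i₀, ζ i k := by
  set σ := Equiv.swap i₀ (l - 1)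
  have hσ : ∀ i, i < l - 1 → σ i < l ∧ σ i ≠ i₀ := fun i hi => by
    simp only [σ, Equiv.swap_apply_def]; split_ifs <;> omega
  refine ⟨l - 1, fun i => ζ (σ i), fun i => I (σ i), fun i hi => hbl _ (hσ i hi).1,
    fun i j hi hj hij => hdis _ _ (hσ i hi).1 (hσ j hj).1 (σ.injective.ne hij), fun k => ?_⟩
  refine (sum_nbij' σ σ (fun i hi => ?_) (fun i hi => ?_) (by simp [σ]) (by simp [σ])
    (fun _ _ => rfl)).symm
  · simp only [mem_range] at hi
    simpa [mem_erase, and_comm] using hσ i hi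
  · simp only [mem_erase, mem_range] at hi ⊢
    simp only [σ, Equiv.swap_apply_def]; split_ifs <;> omega

theorem memColl.exists_block_add {μ : ℕ → ℕ} {p : ℕ} (hμ : memColl N e μ) (hp : μ p ≠ 0) :
    ∃ ζ I μ', IsBlock N e ζ I ∧ p ∈ I ∧ memColl N e μ' ∧ (∀ k ∈ I, μ' k = 0) ∧
      ∀ k, μ k = ζ k + μ' k := by
  obtain ⟨l, ζ, I, hbl, hdis, hsum⟩ := hμ
  obtain ⟨i₀, hi₀, hζp⟩ : ∃ i₀ ∈ range l, ζ i₀ p ≠ 0 :=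
    exists_ne_zero_of_sum_ne_zero (hsum p ▸ hp)
  rw [mem_range] at hi₀
  refine ⟨ζ i₀, I i₀, _, hbl i₀ hi₀, (hbl i₀ hi₀).mem_of_ne_zero hζp,
    memColl_sum_erase hbl hdis hi₀, fun k hk => sum_eq_zero fun i hi => ?_,
    fun k => by rw [hsum, ← add_sum_erase _ _ (mem_range.2 hi₀)]⟩
  obtain ⟨hne, hi⟩ := mem_erase.1 hi
  by_contra h
  exact disjoint_left.1 (hdis i i₀ (mem_range.1 hi) hi₀ hne)
    ((hbl i (mem_range.1 hi)).mem_of_ne_zero h) hk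

theorem memColl.eq_maxBlock_or_exists_lt (het : 1 ≤ et 1) {μ : ℕ → ℕ} {p : ℕ}
    (hμ : memColl M et μ) (hp : μ p ≠ 0) (htop : ∀ k, p < k → μ k = 0) :
    (∀ j, 1 ≤ j → j ≤ p → μ j = maxBlock M et (p + 1) j) ∨
    ∃ a, 1 ≤ a ∧ a ≤ p ∧ (∀ j, a < j → μ j = maxBlock M et (p + 1) j) ∧
      μ a < maxBlock M et (p + 1) a ∧ memColl M et (fun k => if k < a then μ k else 0) := by
  obtain ⟨ζ, I, μ', ⟨n, hn, hcase⟩, hpI, hμ', hμ'I, hsplit⟩ := hμ.exists_block_add hp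
  have hμ'top : ∀ k, p < k → μ' k = 0 := fun k hk => by
    have := hsplit k
    rw [htop k hk] at this
    omega
  have hon : ∀ k ∈ I, μ k = ζ k := fun k hk => by rw [hsplit, hμ'I k hk, add_zero]
  have hpn : p ≤ n - 1 := by
    rcases hcase with ⟨-, hI⟩ | ⟨a, -, hI⟩ <;> rw [hI, mem_Icc] at hpI <;> omega
  have hupper : ∀ j, p < j → ζ j = maxBlock M et n j := by
    rcases hcase with ⟨hζ, -⟩ | ⟨a, ⟨-, -, -, habove, -⟩, hI⟩
    · simp [hζ]
    · rw [hI, mem_Icc] at hpI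
      exact fun j hj => habove j (by omega)
  -- the top digit `et 1` of a block at a higher index would show up above `p`
  have hnp : n = p + 1 := by
    by_contra hne
    have := hsplit (n - 1)
    rw [htop _ (by omega), hupper _ (by omega), maxBlock_of_lt (by omega) (by omega),
      show n - (n - 1) - 1 = 0 by omega, digit_zero] at this
    omega
  subst hnp
  rcases hcase with ⟨hζ, hI⟩ | ⟨a, ⟨-, ha1, hap, habove, hdip, hbelow⟩, hI⟩
  · left
    intro j hj1 hjp
    rw [hon j (by rw [hI, mem_Icc]; omega), hζ]
  · have hIa : ∀ k, a ≤ k → k ≤ p → k ∈ I := fun k h1 h2 => by rw [hI, mem_Icc]; omega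
    refine Or.inr ⟨a, ha1, by omega, fun j hj => ?_, hon a (hIa a le_rfl (by omega)) ▸ hdip, ?_⟩
    · rcases Nat.lt_or_ge p j with hpj | hjp
      · rw [htop j hpj, maxBlock_of_le (by omega)]
      · rw [hon j (hIa j hj.le hjp), habove j hj]
    · convert hμ' using 1
      funext k
      split_ifs with hka
      · rw [hsplit, hbelow k hka, zero_add]
      · rcases Nat.lt_or_ge p k with hpk | hkp
        · exact (hμ'top k hpk).symm
        · exact (hμ'I k (hIa k (by omega) hkp)).symm

/-- The word `w 0, w 1, …, w (p - 1)` as a coefficient function, with `w 0` at the top index `p`. -/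
def wordCoeff (w : ℕ → ℕ) (p : ℕ) : ℕ → ℕ :=
  fun k => if 1 ≤ k ∧ k ≤ p then w (p - k) else 0

theorem wordCoeff_of_le {w : ℕ → ℕ} {p k : ℕ} (hk : 1 ≤ k) (hkp : k ≤ p) :
    wordCoeff w p k = w (p - k) :=
  if_pos ⟨hk, hkp⟩

theorem wordCoeff_digit (p : ℕ) : wordCoeff (digit N e) p = maxBlock N e (p + 1) := by
  funext k
  simp only [wordCoeff, maxBlock, digit, Nat.lt_succ_iff, show p + 1 - k - 1 = p - k by omega]

theorem wordCoeff_zero (w : ℕ → ℕ) : wordCoeff w 0 = 0 := by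
  funext k
  exact if_neg (by omega)

def IsAdmissibleWord (M : ℕ) (et w : ℕ → ℕ) : Prop :=
  ∀ p, memColl M et (wordCoeff w p)

theorem isAdmissibleWord_digit (hsub : ∀ μ, memColl N e μ → memColl M et μ) :
    IsAdmissibleWord M et (digit N e)
  | 0 => wordCoeff_zero _ ▸ memColl_zero
  | p + 1 => wordCoeff_digit (p + 1) ▸ hsub _ (memColl_maxBlock (by omega))

theorem wordCoeff_tail_of_head_eq_zero {w : ℕ → ℕ} (h0 : w 0 = 0) (p : ℕ) :
    wordCoeff (fun j => w (1 + j)) p = wordCoeff w (p + 1) := by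
  funext k
  simp only [wordCoeff]
  split_ifs with h1 h2 h2
  · congr 1; omega
  · omega
  · rw [show p + 1 - k = 0 by omega, h0]
  · rfl

theorem lt_and_memColl_suffix_of_memColl (het : 1 ≤ et 1) {w : ℕ → ℕ} {i q : ℕ}
    (hw : memColl M et (wordCoeff w (i + 1 + q))) (h0 : w 0 ≠ 0)
    (hagree : ∀ j < i, w j = digit M et j) (hdiff : w i ≠ digit M et i) :
    w i < digit M et i ∧ memColl M et (wordCoeff (fun j => w (i + 1 + j)) q) := by
  set p := i + 1 + q
  have hmax : ∀ k, 1 ≤ k → k ≤ p → maxBlock M et (p + 1) k = digit M et (p - k) :=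
    fun k h1 h2 => by rw [← wordCoeff_digit, wordCoeff_of_le h1 h2]
  have hw0 : wordCoeff w p p ≠ 0 := by rwa [wordCoeff_of_le (by omega) le_rfl, Nat.sub_self]
  rcases hw.eq_maxBlock_or_exists_lt het hw0 (fun k hk => if_neg (by omega)) with
    hfull | ⟨a, ha1, hap, habove, hdip, htrunc⟩
  · have := hfull (p - i) (by omega) (by omega)
    rw [wordCoeff_of_le (by omega) (by omega), hmax _ (by omega) (by omega),
      show p - (p - i) = i by omega] at this
    exact absurd this hdiff
  rw [wordCoeff_of_le ha1 hap, hmax a ha1 hap] at hdip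
  -- the dip of the top block sits exactly at the first difference
  have hai : a = q + 1 := by
    rcases lt_trichotomy a (q + 1) with h | h | h
    · have := habove (p - i) (by omega)
      rw [wordCoeff_of_le (by omega) (by omega), hmax _ (by omega) (by omega),
        show p - (p - i) = i by omega] at this
      exact absurd this hdiff
    · exact h
    · exact absurd (hagree (p - a) (by omega)) hdip.ne
  subst hai
  refine ⟨by rwa [show p - (q + 1) = i by omega] at hdip, ?_⟩
  convert htrunc using 1
  funext k
  simp only [wordCoeff]
  split_ifs <;> first | rfl | omega | (congr 1; omega)

theorem IsAdmissibleWord.exists_lt_suffix (het : 1 ≤ et 1) {w : ℕ → ℕ}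
    (hw : IsAdmissibleWord M et w) (hne : ∃ i, w i ≠ digit M et i) :
    ∃ i, (∀ j < i, w j = digit M et j) ∧ w i < digit M et i ∧
      IsAdmissibleWord M et (fun j => w (i + 1 + j)) := by
  classical
  set i := Nat.find hne
  have hagree : ∀ j < i, w j = digit M et j := fun j hj => not_not.1 (Nat.find_min hne hj)
  refine ⟨i, hagree, ?_⟩
  by_cases h0 : w 0 = 0
  · -- `w` already differs from `d̃` at `0`, since `d̃ 0 = et 1 ≠ 0`
    have hi : i = 0 := by
      by_contra hi
      have := hagree 0 (by omega)
      rw [h0, digit_zero] at this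
      omega
    rw [hi, h0, digit_zero]
    exact ⟨het, fun p => wordCoeff_tail_of_head_eq_zero h0 p ▸ hw (p + 1)⟩
  exact ⟨(lt_and_memColl_suffix_of_memColl het (hw _) h0 hagree (Nat.find_spec hne) (q := 0)).1,
    fun q => (lt_and_memColl_suffix_of_memColl het (hw _) h0 hagree (Nat.find_spec hne)).2⟩

noncomputable def wordVal (w : ℕ → ℕ) (y : ℝ) : ℝ := ∑' i, (w i : ℝ) * y ^ (i + 1)

section WordVal

variable {w : ℕ → ℕ} {B : ℕ} {y : ℝ}

theorem summable_wordVal (hB : ∀ i, w i ≤ B) (hy0 : 0 ≤ y) (hy1 : y < 1) :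
    Summable fun i => (w i : ℝ) * y ^ (i + 1) :=
  .of_nonneg_of_le (fun i => by positivity)
    (fun i => mul_le_mul_of_nonneg_right (Nat.cast_le.2 (hB i)) (by positivity))
    ((summable_geometric_of_lt_one hy0 hy1).mul_left (B * y) |>.congr fun i => by ring)

theorem wordVal_le (hB : ∀ i, w i ≤ B) (hy0 : 0 ≤ y) (hy1 : y < 1) :
    wordVal w y ≤ B / (1 - y) := by
  rw [div_eq_mul_inv, ← tsum_geometric_of_lt_one hy0 hy1, ← tsum_mul_left]
  refine Summable.tsum_le_tsum (fun i => ?_) (summable_wordVal hB hy0 hy1)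
    ((summable_geometric_of_lt_one hy0 hy1).mul_left _)
  rw [pow_succ]
  gcongr
  · exact_mod_cast hB i
  · exact mul_le_of_le_one_right (by positivity) hy1.le

theorem wordVal_eq_sum_add (hB : ∀ i, w i ≤ B) (hy0 : 0 ≤ y) (hy1 : y < 1) (L : ℕ) :
    wordVal w y = ∑ i ∈ range L, (w i : ℝ) * y ^ (i + 1) +
      y ^ L * wordVal (fun i => w (L + i)) y := by
  rw [wordVal, wordVal, ← (summable_wordVal hB hy0 hy1).sum_add_tsum_nat_add L, ← tsum_mul_left]
  congr 1
  refine tsum_congr fun i => ?_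
  rw [add_comm i L]
  ring

theorem wordVal_mono (hB : ∀ i, w i ≤ B) {y' : ℝ} (hy0 : 0 ≤ y) (hyy' : y ≤ y') (hy' : y' < 1) :
    wordVal w y ≤ wordVal w y' :=
  Summable.tsum_le_tsum (fun i => by gcongr) (summable_wordVal hB hy0 (hyy'.trans_lt hy'))
    (summable_wordVal hB (hy0.trans hyy') hy')

theorem sum_range_lt_wordVal (hB : ∀ i, w i ≤ B) (hy0 : 0 < y) (hy1 : y < 1) {L j : ℕ}
    (hj : 0 < w (L + j)) : ∑ i ∈ range L, (w i : ℝ) * y ^ (i + 1) < wordVal w y := by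
  rw [wordVal_eq_sum_add hB hy0.le hy1 L, lt_add_iff_pos_right]
  exact mul_pos (by positivity) ((summable_wordVal (fun i => hB _) hy0.le hy1).tsum_pos
    (fun i => by positivity) j (by positivity))

theorem wordVal_le_sum_add_of_lt (hB : ∀ i, w i ≤ B) (hy0 : 0 ≤ y) (hy1 : y < 1) {v : ℕ → ℕ}
    {i : ℕ} (hagree : ∀ j < i, w j = v j) (hlt : w i < v i) :
    wordVal w y ≤ ∑ j ∈ range (i + 1), (v j : ℝ) * y ^ (j + 1) +
      y ^ (i + 1) * (wordVal (fun j => w (i + 1 + j)) y - 1) := by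
  rw [wordVal_eq_sum_add hB hy0 hy1 (i + 1), sum_range_succ, sum_range_succ,
    sum_congr rfl fun j hj => by rw [hagree j (mem_range.1 hj)]]
  have hcast : (w i : ℝ) ≤ v i - 1 := by
    rw [le_sub_iff_add_le]
    exact_mod_cast hlt
  nlinarith [mul_le_mul_of_nonneg_right hcast (pow_nonneg hy0 (i + 1))]

theorem wordVal_le_one_of_forall {P : (ℕ → ℕ) → Prop} {v : ℕ → ℕ} (hy0 : 0 ≤ y) (hy1 : y < 1)
    (hv : ∀ n, ∑ j ∈ range n, (v j : ℝ) * y ^ (j + 1) ≤ 1) (hB : ∀ w, P w → ∀ i, w i ≤ B)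
    (hP : ∀ w, P w → w = v ∨
      ∃ i, (∀ j < i, w j = v j) ∧ w i < v i ∧ P (fun j => w (i + 1 + j)))
    (hw : P w) : wordVal w y ≤ 1 := by
  set C : ℝ := B / (1 - y)
  have hC : 0 ≤ C := div_nonneg (Nat.cast_nonneg B) (by linarith)
  -- each step down to a suffix shrinks the possible excess over `1` by a factor `y`
  have key : ∀ K w, P w → wordVal w y ≤ 1 + C * y ^ K := by
    intro K
    induction K with
    | zero => exact fun w hw => by simpa using (wordVal_le (hB w hw) hy0 hy1).trans (by linarith)
    | succ K ih =>
      intro w hw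
      rcases hP w hw with rfl | ⟨i, hagree, hlt, hsuf⟩
      · exact (Real.tsum_le_of_sum_range_le (fun i => by positivity) hv).trans
          (le_add_of_nonneg_right (by positivity))
      · have hexcess := ih _ hsuf
        have hyi : y ^ (i + 1) * y ^ K ≤ y ^ (K + 1) := by
          rw [← pow_add, add_comm]
          exact pow_le_pow_of_le_one hy0 hy1.le (by omega)
        calc wordVal w y
            ≤ _ := wordVal_le_sum_add_of_lt (hB w hw) hy0 hy1 hagree hlt
          _ ≤ 1 + y ^ (i + 1) * (C * y ^ K) := by
            gcongr
            · exact hv _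
            · linarith
          _ ≤ 1 + C * y ^ (K + 1) := by nlinarith
  have hlim : Tendsto (fun K : ℕ => 1 + C * y ^ K) atTop (𝓝 1) := by
    simpa using ((tendsto_pow_atTop_nhds_zero_of_lt_one hy0 hy1).const_mul C).const_add 1
  exact ge_of_tendsto' hlim fun K => key K w hw

end WordVal

section Comparison

variable {φ φt : ℝ}

theorem sum_mul_inv_pow_add_inv_pow_eq_one (hN : 0 < N) (hφ : φ ≠ 0) (h : fchar N e φ = 0) :
    ∑ j ∈ range N, (e (j + 1) : ℝ) * φ⁻¹ ^ (j + 1) + φ⁻¹ ^ N = 1 := by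
  have hpow : ∀ k ≤ N, φ ^ (N - k) * φ⁻¹ ^ N = φ⁻¹ ^ k := fun k hk =>
    calc φ ^ (N - k) * φ⁻¹ ^ N = φ ^ (N - k) * φ⁻¹ ^ (N - k + k) := by rw [Nat.sub_add_cancel hk]
      _ = (φ * φ⁻¹) ^ (N - k) * φ⁻¹ ^ k := by rw [pow_add, mul_pow, mul_assoc]
      _ = φ⁻¹ ^ k := by rw [mul_inv_cancel₀ hφ, one_pow, one_mul]
  have hone : φ ^ N * φ⁻¹ ^ N = 1 := by rw [← mul_pow, mul_inv_cancel₀ hφ, one_pow]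
  obtain ⟨n, rfl⟩ : ∃ n, N = n + 1 := ⟨N - 1, by omega⟩
  rw [show φ ^ (n + 1) = ∑ k ∈ Ico 1 (n + 1), (e k : ℝ) * φ ^ (n + 1 - k) + (1 + e (n + 1)) by
      unfold fchar at h; linarith,
    add_mul, sum_mul, sum_Ico_eq_sum_range, Nat.add_sub_cancel,
    sum_congr rfl fun j hj => by rw [mul_assoc, hpow _ (by simp at hj; omega), add_comm 1 j]] at hone
  rw [← hone, sum_range_succ]
  ring

theorem wordVal_digit (hN : 0 < N) (hφ : 1 < φ) (h : fchar N e φ = 0) :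
    wordVal (digit N e) φ⁻¹ = 1 := by
  have hy0 : 0 ≤ φ⁻¹ := by positivity
  have hy1 : φ⁻¹ < 1 := inv_lt_one_of_one_lt₀ hφ
  have hyN : φ⁻¹ ^ N < 1 := pow_lt_one₀ hy0 hy1 hN.ne'
  have hroot := sum_mul_inv_pow_add_inv_pow_eq_one hN (by positivity) h
  have hsplit := wordVal_eq_sum_add (digit_le_sup (e := e) hN) hy0 hy1 N
  -- periodicity: the suffix after one period is the word itself
  simp_rw [add_comm N, digit_add_period] at hsplit
  rw [sum_congr rfl fun i hi => by rw [digit_of_lt (mem_range.1 hi)]] at hsplit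
  nlinarith

theorem sum_range_digit_mul_inv_pow_lt_one (hN : 0 < N) (he : 1 ≤ e 1) (hφ : 1 < φ)
    (h : fchar N e φ = 0) (n : ℕ) : ∑ j ∈ range n, (digit N e j : ℝ) * φ⁻¹ ^ (j + 1) < 1 :=
  -- `d` has the nonzero digit `e 1` at every multiple of `N`
  wordVal_digit hN hφ h ▸ sum_range_lt_wordVal (digit_le_sup hN) (by positivity)
    (inv_lt_one_of_one_lt₀ hφ) (j := n * N - n)
    (by rw [Nat.add_sub_cancel' (Nat.le_mul_of_pos_right n hN), digit_mul_period]; omega)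

theorem lt_of_memColl_ssubset (hN : 0 < N) (hM : 0 < M) (het : 1 ≤ et 1)
    (hsub : {μ | memColl N e μ} ⊂ {μ | memColl M et μ}) (hφ : 1 < φ) (hφroot : fchar N e φ = 0)
    (hφt : 1 < φt) (hφtroot : fchar M et φt = 0) : φ < φt := by
  set y := φt⁻¹
  have hy0 : 0 < y := by positivity
  have hy1 : y < 1 := inv_lt_one_of_one_lt₀ hφt
  set B := (range N).sup fun j => e (j + 1)
  have hdigitB : ∀ i, digit N e i ≤ B := digit_le_sup hN
  have hprefix := sum_range_digit_mul_inv_pow_lt_one hM het hφt hφtroot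
  set P : (ℕ → ℕ) → Prop := fun w => IsAdmissibleWord M et w ∧ ∀ i, w i ≤ B
  have hP : ∀ w, P w → w = digit M et ∨ ∃ i, (∀ j < i, w j = digit M et j) ∧
      w i < digit M et i ∧ P (fun j => w (i + 1 + j)) := by
    rintro w ⟨hw, hwB⟩
    by_cases h : w = digit M et
    · exact Or.inl h
    obtain ⟨i, hagree, hlt, hsuf⟩ := hw.exists_lt_suffix het (Function.ne_iff.1 h)
    exact Or.inr ⟨i, hagree, hlt, hsuf, fun j => hwB _⟩
  have hne : digit N e ≠ digit M et := fun h =>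
    hsub.ne (by rw [memColl_eq_of_digit_eq h])
  obtain ⟨i, hagree, hlt, hsuf⟩ := (isAdmissibleWord_digit fun μ h => hsub.subset h).exists_lt_suffix
    het (Function.ne_iff.1 hne)
  have hsuf_le : wordVal (fun j => digit N e (i + 1 + j)) y ≤ 1 :=
    wordVal_le_one_of_forall hy0.le hy1 (fun n => (hprefix n).le) (fun w hw => hw.2) hP
      ⟨hsuf, fun j => hdigitB _⟩
  have hval : wordVal (digit N e) y < 1 :=
    calc wordVal (digit N e) y
        ≤ _ := wordVal_le_sum_add_of_lt hdigitB hy0.le hy1 hagree hlt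
      _ ≤ ∑ j ∈ range (i + 1), (digit M et j : ℝ) * y ^ (j + 1) :=
        add_le_of_nonpos_right (mul_nonpos_of_nonneg_of_nonpos (by positivity) (by linarith))
      _ < 1 := hprefix _
  by_contra hle
  have := wordVal_mono hdigitB (by positivity) (inv_anti₀ (by positivity) (not_lt.1 hle)) hy1
  rw [wordVal_digit hN hφ hφroot] at this
  linarith

end Comparison

section Renewal

variable {p u : ℕ → ℝ}

theorem mem_Icc_of_window (hp : ∀ i, 0 ≤ p i) (hsum : ∑ i ∈ range N, p i = 1)
    (hu : ∀ n, u (n + N) = ∑ i ∈ range N, p i * u (n + i)) {n : ℕ} {b B : ℝ}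
    (hwin : ∀ i < N, u (n + i) ∈ Set.Icc b B) (m : ℕ) (hm : n ≤ m) : u m ∈ Set.Icc b B := by
  induction m using Nat.strong_induction_on with
  | _ m ih =>
    by_cases hmN : m < n + N
    · simpa [show n + (m - n) = m by omega] using hwin (m - n) (by omega)
    obtain ⟨k, rfl⟩ : ∃ k, m = k + N := ⟨m - N, by omega⟩
    have hprev : ∀ i ∈ range N, u (k + i) ∈ Set.Icc b B := fun i hi =>
      ih _ (by simp at hi; omega) (by omega)
    rw [hu]
    constructor
    · calc b = ∑ i ∈ range N, p i * b := by rw [← sum_mul, hsum, one_mul]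
        _ ≤ _ := sum_le_sum fun i hi => mul_le_mul_of_nonneg_left (hprev i hi).1 (hp i)
    · calc _ ≤ ∑ i ∈ range N, p i * B :=
            sum_le_sum fun i hi => mul_le_mul_of_nonneg_left (hprev i hi).2 (hp i)
        _ = B := by rw [← sum_mul, hsum, one_mul]

theorem mul_sub_le_of_window (hp : ∀ i, 0 ≤ p i) (hsum : ∑ i ∈ range N, p i = 1)
    (hu : ∀ n, u (n + N) = ∑ i ∈ range N, p i * u (n + i)) {k i : ℕ} (hi : i < N) {b : ℝ}
    (hb : ∀ j < N, b ≤ u (k + j)) : p i * (u (k + i) - b) ≤ u (k + N) - b := by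
  have : u (k + N) - b = ∑ j ∈ range N, p j * (u (k + j) - b) := by
    simp only [mul_sub, sum_sub_distrib, ← sum_mul, hsum, one_mul, hu]
  rw [this]
  exact single_le_sum (f := fun j => p j * (u (k + j) - b))
    (fun j hj => mul_nonneg (hp j) (sub_nonneg.2 (hb j (mem_range.1 hj)))) (mem_range.2 hi)

theorem pow_mul_sub_le (hp : ∀ i, 0 ≤ p i) (hsum : ∑ i ∈ range N, p i = 1)
    (hu : ∀ n, u (n + N) = ∑ i ∈ range N, p i * u (n + i)) (hN : 0 < N) {n : ℕ} {b : ℝ}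
    (hb : ∀ m, n ≤ m → b ≤ u m) {m : ℕ} (hm : n ≤ m) (t : ℕ) :
    p 0 * p (N - 1) ^ t * (u m - b) ≤ u (m + N + t) - b := by
  induction t with
  | zero => simpa using mul_sub_le_of_window hp hsum hu hN fun j _ => hb (m + j) (by omega)
  | succ t ih =>
    have hstep := mul_sub_le_of_window hp hsum hu (k := m + t + 1) (i := N - 1) (by omega)
      fun j _ => hb _ (by omega)
    rw [show m + t + 1 + (N - 1) = m + N + t by omega,
      show m + t + 1 + N = m + N + (t + 1) by omega] at hstep
    calc p 0 * p (N - 1) ^ (t + 1) * (u m - b)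
        = p (N - 1) * (p 0 * p (N - 1) ^ t * (u m - b)) := by ring
      _ ≤ p (N - 1) * (u (m + N + t) - b) := mul_le_mul_of_nonneg_left ih (hp _)
      _ ≤ _ := hstep

theorem exists_window_contraction (hp : ∀ i, 0 ≤ p i) (hsum : ∑ i ∈ range N, p i = 1)
    (hu : ∀ n, u (n + N) = ∑ i ∈ range N, p i * u (n + i)) (hN : 0 < N) (hp0 : 0 < p 0)
    (hplast : 0 < p (N - 1)) :
    ∃ κ : ℝ, 0 < κ ∧ κ < 1 ∧ ∀ n b B, (∀ i < N, u (n + i) ∈ Set.Icc b B) →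
      ∃ b' B', B' - b' ≤ κ * (B - b) ∧ ∀ i < N, u (n + 2 * N + i) ∈ Set.Icc b' B' := by
  have hple : ∀ i < N, p i ≤ 1 := fun i hi =>
    hsum ▸ single_le_sum (fun j _ => hp j) (mem_range.2 hi)
  set δ := p 0 * p (N - 1) ^ (2 * N)
  have hδ0 : 0 < δ := by positivity
  have hδ1 : δ ≤ 1 :=
    mul_le_one₀ (hple 0 hN) (by positivity) (pow_le_one₀ (hp _) (hple _ (by omega)))
  refine ⟨1 - δ / 2, by linarith, by linarith, fun n b B hwin => ?_⟩
  obtain ⟨i₀, hi₀, hmax⟩ := exists_max_image (range N) (fun i => u (n + i)) ⟨0, mem_range.2 hN⟩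
  rw [mem_range] at hi₀
  set B₀ := u (n + i₀)
  have hbB₀ : b ≤ B₀ := (hwin i₀ hi₀).1
  have hB₀B : B₀ ≤ B := (hwin i₀ hi₀).2
  have hlater : ∀ m, n ≤ m → u m ∈ Set.Icc b B₀ := mem_Icc_of_window hp hsum hu
    fun i hi => ⟨(hwin i hi).1, hmax i (mem_range.2 hi)⟩
  refine ⟨b + δ * (B₀ - b), B₀, ?_, fun i hi => ⟨?_, (hlater _ (by omega)).2⟩⟩
  · nlinarith [mul_nonneg hδ0.le (sub_nonneg.2 hbB₀)]
  · have hchain := pow_mul_sub_le hp hsum hu hN (fun m hm => (hlater m hm).1)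
      (m := n + i₀) (by omega) (N + i - i₀)
    rw [show n + i₀ + N + (N + i - i₀) = n + 2 * N + i by omega] at hchain
    have hδle : δ ≤ p 0 * p (N - 1) ^ (N + i - i₀) := mul_le_mul_of_nonneg_left
      (pow_le_pow_of_le_one (hp _) (hple _ (by omega)) (by omega)) (hp 0)
    nlinarith [mul_le_mul_of_nonneg_right hδle (sub_nonneg.2 hbB₀)]

theorem exists_tail_width_le (hp : ∀ i, 0 ≤ p i) (hsum : ∑ i ∈ range N, p i = 1)
    (hu : ∀ n, u (n + N) = ∑ i ∈ range N, p i * u (n + i)) (hN : 0 < N) (hp0 : 0 < p 0)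
    (hplast : 0 < p (N - 1)) :
    ∃ C ρ : ℝ, 0 < ρ ∧ ρ < 1 ∧
      ∀ n, ∃ b B, B - b ≤ C * ρ ^ n ∧ ∀ m, n ≤ m → u m ∈ Set.Icc b B := by
  obtain ⟨κ, hκ0, hκ1, hcontr⟩ := exists_window_contraction hp hsum hu hN hp0 hplast
  set ρ := κ ^ ((2 * N : ℕ) : ℝ)⁻¹
  have hρ0 : 0 < ρ := Real.rpow_pos_of_pos hκ0 _
  have hρ1 : ρ < 1 := Real.rpow_lt_one hκ0.le hκ1 (by positivity)
  have hρN : ρ ^ (2 * N) = κ := Real.rpow_inv_natCast_pow hκ0.le (by omega)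
  set W := ∑ i ∈ range N, |u i|
  have hW : ∀ m, u m ∈ Set.Icc (-W) W := fun m =>
    mem_Icc_of_window hp hsum hu (n := 0) (fun i hi => by
      simpa [abs_le] using single_le_sum (f := fun i => |u i|) (fun _ _ => abs_nonneg _)
        (mem_range.2 hi)) m (Nat.zero_le m)
  set C := 2 * W / ρ ^ (2 * N)
  have hwin : ∀ n, ∃ b B, B - b ≤ C * ρ ^ n ∧ ∀ i < N, u (n + i) ∈ Set.Icc b B := by
    intro n
    induction n using Nat.strong_induction_on with
    | _ n ih =>
      by_cases hn : n < 2 * N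
      · refine ⟨-W, W, ?_, fun i _ => hW _⟩
        have hρn : ρ ^ (2 * N) ≤ ρ ^ n := pow_le_pow_of_le_one hρ0.le hρ1.le hn.le
        have hW0 : 0 ≤ W := sum_nonneg fun i _ => abs_nonneg _
        rw [div_mul_eq_mul_div, le_div_iff₀ (by positivity)]
        nlinarith
      · obtain ⟨b, B, hwidth, hmem⟩ := ih (n - 2 * N) (by omega)
        obtain ⟨b', B', hwidth', hmem'⟩ := hcontr _ b B hmem
        rw [Nat.sub_add_cancel (by omega)] at hmem'
        refine ⟨b', B', ?_, hmem'⟩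
        calc B' - b' ≤ κ * (B - b) := hwidth'
          _ ≤ κ * (C * ρ ^ (n - 2 * N)) := mul_le_mul_of_nonneg_left hwidth hκ0.le
          _ = C * ρ ^ n := by
            rw [← hρN, mul_left_comm, ← pow_add, Nat.add_sub_cancel' (by omega)]
  refine ⟨C, ρ, hρ0, hρ1, fun n => ?_⟩
  obtain ⟨b, B, hwidth, hmem⟩ := hwin n
  exact ⟨b, B, hwidth, mem_Icc_of_window hp hsum hu hmem⟩

theorem exists_abs_sub_le_geometric (hp : ∀ i, 0 ≤ p i) (hsum : ∑ i ∈ range N, p i = 1)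
    (hu : ∀ n, u (n + N) = ∑ i ∈ range N, p i * u (n + i)) (hN : 0 < N) (hp0 : 0 < p 0)
    (hplast : 0 < p (N - 1)) :
    ∃ a C ρ : ℝ, 0 < ρ ∧ ρ < 1 ∧ ∀ n, |u n - a| ≤ C * ρ ^ n := by
  obtain ⟨C, ρ, hρ0, hρ1, htail⟩ := exists_tail_width_le hp hsum hu hN hp0 hplast
  have hstep : ∀ n, dist (u n) (u (n + 1)) ≤ C * ρ ^ n := fun n => by
    obtain ⟨b, B, hwidth, hmem⟩ := htail n
    have h1 := hmem n le_rfl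
    have h2 := hmem (n + 1) (by omega)
    rw [Real.dist_eq, abs_le]
    constructor <;> linarith [h1.1, h1.2, h2.1, h2.2]
  obtain ⟨a, ha⟩ := cauchySeq_tendsto_of_complete (cauchySeq_of_le_geometric ρ C hρ1 hstep)
  refine ⟨a, C / (1 - ρ), ρ, hρ0, hρ1, fun n => ?_⟩
  rw [div_mul_eq_mul_div, ← Real.dist_eq]
  exact dist_le_of_le_geometric_of_tendsto ρ C hρ1 hstep ha n

end Renewal

theorem tendsto_of_abs_sub_le_geometric {u : ℕ → ℝ} {a C ρ : ℝ} (h : ∀ n, |u n - a| ≤ C * ρ ^ n)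
    (hρ0 : 0 ≤ ρ) (hρ1 : ρ < 1) : Tendsto u atTop (𝓝 a) :=
  tendsto_iff_norm_sub_tendsto_zero.2 <| squeeze_zero (fun n => norm_nonneg _) h <| by
    simpa using (tendsto_pow_atTop_nhds_zero_of_lt_one hρ0 hρ1).const_mul C

/-- The weights of the recurrence satisfied by `H (n + 1) * y ^ n`. -/
def weight (N : ℕ) (e : ℕ → ℕ) (y : ℝ) (i : ℕ) : ℝ :=
  e (N - i) * y ^ (N - i) + if i = 0 then y ^ N else 0

section Weight

variable {y : ℝ}

theorem weight_nonneg (hy : 0 ≤ y) (i : ℕ) : 0 ≤ weight N e y i := by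
  unfold weight
  split_ifs <;> positivity

theorem weight_zero_pos (hy : 0 < y) : 0 < weight N e y 0 := by
  simp only [weight, if_true]
  positivity

theorem weight_pred_pos (hN : 2 ≤ N) (he : 1 ≤ e 1) (hy : 0 < y) : 0 < weight N e y (N - 1) := by
  simp only [weight, if_neg (show N - 1 ≠ 0 by omega), add_zero, show N - (N - 1) = 1 by omega]
  have : (1 : ℝ) ≤ e 1 := by exact_mod_cast he
  positivity

theorem sum_weight {φ : ℝ} (hN : 0 < N) (hφ : φ ≠ 0) (hroot : fchar N e φ = 0) :
    ∑ i ∈ range N, weight N e φ⁻¹ i = 1 := by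
  unfold weight
  rw [sum_add_distrib, sum_ite_eq' (range N) 0, if_pos (mem_range.2 hN), ← sum_range_reflect,
    ← sum_mul_inv_pow_add_inv_pow_eq_one hN hφ hroot]
  congr 1
  refine sum_congr rfl fun j hj => ?_
  rw [show N - (N - 1 - j) = j + 1 by simp at hj; omega]

end Weight

def IsFundamentalSeq (N : ℕ) (e H : ℕ → ℕ) : Prop :=
  H 1 = 1 ∧ ∀ n, 2 ≤ n → H n = 1 + ∑ k ∈ Ico 1 n, maxBlock N e n k * H k

namespace IsFundamentalSeq

variable {H : ℕ → ℕ}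

theorem succ (hH : IsFundamentalSeq N e H) (q : ℕ) :
    H (q + 1) = 1 + ∑ k ∈ Ico 1 (q + 1), maxBlock N e (q + 1) k * H k := by
  rcases q with _ | q
  · simp [hH.1]
  · exact hH.2 _ (by omega)

theorem one_le (hH : IsFundamentalSeq N e H) (q : ℕ) : 1 ≤ H (q + 1) := by
  rw [hH.succ]
  omega

/-- Periodicity of the digits turns the full-history recurrence into one of order `N`. -/
theorem add_period (hH : IsFundamentalSeq N e H) (q : ℕ) :
    H (q + N + 1) = H (q + 1) + ∑ i ∈ range N, e (N - i) * H (q + 1 + i) := by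
  have hlow : ∑ k ∈ Ico 1 (q + 1), maxBlock N e (q + N + 1) k * H k =
      ∑ k ∈ Ico 1 (q + 1), maxBlock N e (q + 1) k * H k := sum_congr rfl fun k hk => by
    rw [mem_Ico] at hk
    rw [maxBlock_of_lt hk.1 (by omega), maxBlock_of_lt hk.1 hk.2,
      show q + N + 1 - k - 1 = q + 1 - k - 1 + N by omega, digit_add_period]
  have hhigh : ∑ k ∈ Ico (q + 1) (q + N + 1), maxBlock N e (q + N + 1) k * H k =
      ∑ i ∈ range N, e (N - i) * H (q + 1 + i) := by
    rw [sum_Ico_eq_sum_range, show q + N + 1 - (q + 1) = N by omega]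
    refine sum_congr rfl fun i hi => ?_
    rw [mem_range] at hi
    rw [maxBlock_of_lt (by omega) (by omega), show q + N + 1 - (q + 1 + i) - 1 = N - 1 - i by omega,
      digit_of_lt (by omega), show N - 1 - i + 1 = N - i by omega]
  rw [hH.succ (q + N), ← sum_Ico_consecutive _ (by omega : 1 ≤ q + 1)
    (by omega : q + 1 ≤ q + N + 1), hlow, hhigh, ← add_assoc, ← hH.succ q]

theorem mul_pow_add_period (hH : IsFundamentalSeq N e H) (hN : 0 < N) (y : ℝ) (n : ℕ) :
    H (n + N + 1) * y ^ (n + N) = ∑ i ∈ range N, weight N e y i * (H (n + i + 1) * y ^ (n + i)) := by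
  have hpow : ∀ i < N, y ^ (N - i) * y ^ (n + i) = y ^ (n + N) := fun i hi => by
    rw [← pow_add]
    congr 1
    omega
  simp only [weight, add_mul, sum_add_distrib, ite_mul, zero_mul, sum_ite_eq', mem_range,
    if_pos hN, add_zero]
  rw [hH.add_period n]
  push_cast
  rw [add_mul, sum_mul, add_comm]
  congr 1
  · exact sum_congr rfl fun i hi => by
      rw [← hpow i (mem_range.1 hi), add_right_comm n 1 i]
      ring
  · rw [pow_add]
    ring

theorem exists_abs_div_pow_sub_le {φ : ℝ} (hH : IsFundamentalSeq N e H) (hN : 2 ≤ N)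
    (he : 1 ≤ e 1) (hφ : 1 < φ) (hroot : fchar N e φ = 0) :
    ∃ α, 0 < α ∧ ∃ C ρ : ℝ, 0 < ρ ∧ ρ < 1 ∧ ∀ n, |(H (n + 1) : ℝ) / φ ^ n - α| ≤ C * ρ ^ n := by
  have hy : 0 < φ⁻¹ := by positivity
  set u : ℕ → ℝ := fun n => H (n + 1) * φ⁻¹ ^ n
  have hw := weight_nonneg (N := N) (e := e) hy.le
  have hsum := sum_weight (by omega) (by positivity) hroot
  have hu : ∀ n, u (n + N) = ∑ i ∈ range N, weight N e φ⁻¹ i * u (n + i) :=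
    hH.mul_pow_add_period (by omega) φ⁻¹
  obtain ⟨α, C, ρ, hρ0, hρ1, hbound⟩ := exists_abs_sub_le_geometric hw hsum hu (by omega)
    (weight_zero_pos hy) (weight_pred_pos hN he hy)
  have hne : (range N).Nonempty := ⟨0, mem_range.2 (by omega)⟩
  have hupos : 0 < (range N).inf' hne u := (lt_inf'_iff hne).2 fun i _ => by
    have : (1 : ℝ) ≤ H (i + 1) := by exact_mod_cast hH.one_le i
    positivity
  -- `u` stays above the minimum of its first window, and so does its limit
  have hα : (range N).inf' hne u ≤ α :=
    ge_of_tendsto' (tendsto_of_abs_sub_le_geometric hbound hρ0.le hρ1) fun n =>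
      (mem_Icc_of_window hw hsum hu (n := 0) (B := (range N).sup' hne u)
        (fun i hi => by
          rw [zero_add]
          exact ⟨inf'_le _ (mem_range.2 hi), le_sup' u (mem_range.2 hi)⟩) n n.zero_le).1
  refine ⟨α, hupos.trans_le hα, C, ρ, hρ0, hρ1, fun n => ?_⟩
  simpa [u, div_eq_mul_inv] using hbound n

end IsFundamentalSeq

section Asymptotics

variable {f : ℕ → ℝ} {φ α C ρ : ℝ}

theorem tendsto_div_pow_pred (h : ∀ n, |f (n + 1) / φ ^ n - α| ≤ C * ρ ^ n) (hρ0 : 0 ≤ ρ)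
    (hρ1 : ρ < 1) : Tendsto (fun n => f n / φ ^ (n - 1)) atTop (𝓝 α) := by
  rw [← tendsto_add_atTop_iff_nat 1]
  simpa using tendsto_of_abs_sub_le_geometric h hρ0 hρ1

theorem isBigO_sub_mul_pow_pred (h : ∀ n, |f (n + 1) / φ ^ n - α| ≤ C * ρ ^ n) (hφ : 1 < φ)
    (hρ0 : 0 < ρ) {r : ℝ} (hr : 1 + Real.logb φ ρ ≤ r) :
    (fun n => f n - α * φ ^ (n - 1)) =O[atTop] fun n => φ ^ (r * n) := by
  have hφ0 : 0 < φ := by linarith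
  have hρφ : ρ * φ = φ ^ (1 + Real.logb φ ρ) := by
    rw [Real.rpow_add hφ0, Real.rpow_one, Real.rpow_logb hφ0 hφ.ne' hρ0, mul_comm]
  refine IsBigO.of_bound (C / (ρ * φ)) ?_
  filter_upwards [eventually_ge_atTop 1] with n hn
  obtain ⟨m, rfl⟩ : ∃ m, n = m + 1 := ⟨n - 1, by omega⟩
  have hC : 0 ≤ C := by simpa using (abs_nonneg _).trans (h 0)
  rw [Nat.add_sub_cancel, Real.norm_eq_abs, Real.norm_of_nonneg (by positivity)]
  calc |f (m + 1) - α * φ ^ m| = |f (m + 1) / φ ^ m - α| * φ ^ m := by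
        rw [← abs_of_pos (pow_pos hφ0 m), ← abs_mul, abs_of_pos (pow_pos hφ0 m), sub_mul,
          div_mul_cancel₀ _ (by positivity)]
    _ ≤ C * ρ ^ m * φ ^ m := by gcongr; exact h m
    _ = C / (ρ * φ) * (ρ * φ) ^ (m + 1) := by field_simp; ring
    _ ≤ C / (ρ * φ) * φ ^ (r * (m + 1 : ℕ)) := by
        gcongr
        rw [hρφ, ← Real.rpow_natCast, ← Real.rpow_mul hφ0.le]
        exact Real.rpow_le_rpow_of_exponent_le hφ.le
          (mul_le_mul_of_nonneg_right hr (Nat.cast_nonneg _))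

theorem tendsto_div_rpow {g : ℕ → ℝ} {φt αt γ : ℝ}
    (hf : Tendsto (fun n => f n / φ ^ (n - 1)) atTop (𝓝 α))
    (hg : Tendsto (fun n => g n / φt ^ (n - 1)) atTop (𝓝 αt)) (hg0 : ∀ n, 0 ≤ g n)
    (hαt : 0 < αt) (hφt : 0 < φt) (hγ : φt ^ γ = φ) :
    Tendsto (fun n => f n / g n ^ γ) atTop (𝓝 (α / αt ^ γ)) := by
  have hφ : 0 < φ := hγ ▸ Real.rpow_pos_of_pos hφt γ
  refine (hf.div (hg.rpow_const (Or.inl hαt.ne')) (Real.rpow_pos_of_pos hαt γ).ne').congr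
    fun n => ?_
  rw [Pi.div_apply, Real.div_rpow (hg0 n) (by positivity), ← Real.rpow_pow_comm hφt.le, hγ,
    div_div_div_cancel_right₀ (by positivity)]

end Asymptotics

end Zeck

/-- If `E ⊊ Ẽ` then `φ < φ̃`; Binet-type asymptotics for the fundamental sequences, and
`H_n/(H̃_n)^γ → α/α̃^γ > 0` where `γ = ln φ / ln φ̃ ∈ (0,1)`. -/
theorem ratios_of_fundamental_sequences (N M : ℕ) (e et : ℕ → ℕ)
    (hN : 2 ≤ N) (hM : 2 ≤ M) (he : 1 ≤ e 1) (het : 1 ≤ et 1)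
    (hsub : {μ | memColl N e μ} ⊂ {μ | memColl M et μ})
    (H Ht : ℕ → ℕ) (hH1 : H 1 = 1)
    (hHrec : ∀ n, 2 ≤ n → H n = 1 + ∑ k ∈ Finset.Ico 1 n, maxBlock N e n k * H k)
    (hHt1 : Ht 1 = 1)
    (hHtrec : ∀ n, 2 ≤ n → Ht n = 1 + ∑ k ∈ Finset.Ico 1 n, maxBlock M et n k * Ht k)
    (φ φt : ℝ) (hφ : 1 < φ) (hφroot : fchar N e φ = 0)
    (hφt : 1 < φt) (hφtroot : fchar M et φt = 0)
    (γ : ℝ) (hγ : γ = Real.log φ / Real.log φt) :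
    φ < φt ∧ 0 < γ ∧ γ < 1 ∧
    ∃ α : ℝ, 0 < α ∧ ∃ αt : ℝ, 0 < αt ∧ ∃ r : ℝ, r < 1 ∧
      ((fun n : ℕ => (H n : ℝ) - α * φ ^ (n - 1)) =O[atTop]
        (fun n : ℕ => φ ^ (r * (n : ℝ)))) ∧
      ((fun n : ℕ => (Ht n : ℝ) - αt * φt ^ (n - 1)) =O[atTop]
        (fun n : ℕ => φt ^ (r * (n : ℝ)))) ∧
      Filter.Tendsto (fun n : ℕ => (H n : ℝ) / (Ht n : ℝ) ^ γ) Filter.atTop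
        (nhds (α / αt ^ γ)) ∧
      0 < α / αt ^ γ := by
  have hlt : φ < φt := lt_of_memColl_ssubset (by omega) (by omega) het hsub hφ hφroot hφt hφtroot
  have hlog := Real.log_pos hφ
  have hlogt := Real.log_pos hφt
  have hγpow : φt ^ γ = φ := by
    rw [hγ, Real.rpow_def_of_pos (by linarith), mul_div_cancel₀ _ hlogt.ne',
      Real.exp_log (by linarith)]
  obtain ⟨α, hα, C, ρ, hρ0, hρ1, hbound⟩ :=
    IsFundamentalSeq.exists_abs_div_pow_sub_le ⟨hH1, hHrec⟩ hN he hφ hφroot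
  obtain ⟨αt, hαt, Ct, ρt, hρt0, hρt1, hboundt⟩ :=
    IsFundamentalSeq.exists_abs_div_pow_sub_le ⟨hHt1, hHtrec⟩ hM het hφt hφtroot
  refine ⟨hlt, hγ ▸ div_pos hlog hlogt,
    hγ ▸ (div_lt_one hlogt).2 (Real.log_lt_log (by linarith) hlt), α, hα, αt, hαt,
    max (1 + Real.logb φ ρ) (1 + Real.logb φt ρt),
    max_lt (by linarith [Real.logb_neg hφ hρ0 hρ1]) (by linarith [Real.logb_neg hφt hρt0 hρt1]),
    isBigO_sub_mul_pow_pred hbound hφ hρ0 (le_max_left _ _),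
    isBigO_sub_mul_pow_pred hboundt hφt hρt0 (le_max_right _ _),
    tendsto_div_rpow (tendsto_div_pow_pred hbound hρ0.le hρ1)
      (tendsto_div_pow_pred hboundt hρt0.le hρt1) (fun n => Nat.cast_nonneg _) hαt
      (by linarith) hγpow, by positivity⟩
end
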